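/- arXiv:2503.12561 — 6 statements merged into one kernel-verified Lean document; each statement's English description precedes it below -/
import Mathlib

section
/- For every integer n ≥ 2, the number of directed spanning trees rooted at vertex 1 of the directed strip graph S_n equals J_{n-2} + J_{n-1}, where J is the Jacobsthal sequence. -/
open Relation Finset

def jacobsthal : ℕ → ℕ
  | 0 => 0
  | 1 => 1
  | n + 2 => jacobsthal (n + 1) + 2 * jacobsthal n

/-- The symmetric (underlying undirected) reachability of a directed edge set is total. -/
def weaklyConnected {V : Type*} (E : Set (V × V)) : Prop :=
  ∀ u v : V, Relation.ReflTransGen (fun a b => (a, b) ∈ E ∨ (b, a) ∈ E) u v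

/-- One directed step along an edge set. -/
def dstep {V : Type*} (E : Set (V × V)) (a b : V) : Prop := (a, b) ∈ E

/-- Directed spanning tree of the digraph with edge set `Amb`, rooted at `u`. -/
def IsDirSpanningTree {V : Type*} (Amb : Set (V × V)) (u : V) (E : Set (V × V)) : Prop :=
  E ⊆ Amb ∧ weaklyConnected E ∧
    (∀ v : V, ¬ Relation.TransGen (dstep E) v v) ∧
    (∀ v : V, v ≠ u → ∃! w : V, (w, v) ∈ E) ∧
    (∀ v : V, v ≠ u → Relation.ReflTransGen (dstep E) u v)

/-- Directed strip graph on `m` vertices (vertex `i+1` of the paper is `i : Fin m`). -/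
def stripEdges (m : ℕ) : Set (Fin m × Fin m) :=
  {p | p.2.val = p.1.val + 1 ∨ p.2.val = p.1.val + 2}

/-- Directed spanning tree of the strip graph rooted at its first vertex. -/
def IsStripTree (m : ℕ) (E : Set (Fin m × Fin m)) : Prop :=
  E ⊆ stripEdges m ∧ weaklyConnected E ∧
    (∀ v, ¬ Relation.TransGen (dstep E) v v) ∧
    (∀ v : Fin m, v.val ≠ 0 → ∃! w : Fin m, (w, v) ∈ E) ∧
    (∀ v : Fin m, v.val ≠ 0 → ∃ u : Fin m, u.val = 0 ∧ Relation.ReflTransGen (dstep E) u v)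

/-- `t(S_m, 1)`: number of directed spanning trees of the strip graph rooted at vertex 1. -/
noncomputable def tStrip (m : ℕ) : ℕ := Set.ncard {E : Set (Fin m × Fin m) | IsStripTree m E}

def frame (n : ℕ) (i : ℤ) : ZMod n × ZMod n := ((i : ZMod n), ((i + 1 : ℤ) : ZMod n))

def window (n : ℕ) (i : ℤ) : ZMod n × ZMod n := ((i : ZMod n), ((i + 2 : ℤ) : ZMod n))

/-- Edge set of the directed square cycle. -/
def sqCycleEdges (n : ℕ) : Set (ZMod n × ZMod n) :=
  {p | ∃ i : ℤ, p = frame n i ∨ p = window n i}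

def windowsSet (n : ℕ) : Set (ZMod n × ZMod n) := {p | ∃ i : ℤ, p = window n i}

def triangleEdges (n : ℕ) (i : ℤ) : Set (ZMod n × ZMod n) :=
  {frame n i, frame n (i + 1), window n i}

def IsClosedSub (n : ℕ) (E : Set (ZMod n × ZMod n)) : Prop :=
  ∀ i : ℤ, (triangleEdges n i ∩ E).Subsingleton ∨ triangleEdges n i ⊆ E

/-- Weakly connected spanning closed subgraph of the square cycle. -/
def IsWCSC (n : ℕ) (E : Set (ZMod n × ZMod n)) : Prop :=
  E ⊆ sqCycleEdges n ∧ weaklyConnected E ∧ IsClosedSub n E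

/-- A spanning subgraph is nontrivial if it is neither the whole square cycle
nor the all-windows subgraph. -/
def NontrivialSub (n : ℕ) (E : Set (ZMod n × ZMod n)) : Prop :=
  E ≠ sqCycleEdges n ∧ E ≠ windowsSet n

def escapeRoute (n : ℕ) (k j : ℤ) : Set (ZMod n × ZMod n) :=
  {window n (j - 2), window n (j + 2 * k - 1)} ∪
    {p | ∃ i : ℤ, j - 1 ≤ i ∧ i ≤ j + 2 * k - 1 ∧ p = frame n i}

/-- Edge set of the directed strip graph with tails `S_{n,k,j}`. -/
def stripTailEdges (n : ℕ) (k j : ℤ) : Set (ZMod n × ZMod n) :=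
  sqCycleEdges n \ escapeRoute n k j

namespace StripAux

def treeEdges (m : ℕ) (f : Fin m → Bool) : Set (Fin m × Fin m) :=
  {p | p.2.val = p.1.val + (if f p.2 then 2 else 1)}

def goodF (m : ℕ) : Set (Fin m → Bool) := {f | ∀ v : Fin m, v.val < 2 → f v = false}

lemma mem_treeEdges {m : ℕ} {f : Fin m → Bool} {w v : Fin m} :
    (w, v) ∈ treeEdges m f ↔ v.val = w.val + (if f v then 2 else 1) := Iff.rfl

lemma step_lt {m : ℕ} {f : Fin m → Bool} {a b : Fin m}
    (h : dstep (treeEdges m f) a b) : a.val < b.val := by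
  have h' : b.val = a.val + (if f b then 2 else 1) := h
  split at h' <;> omega

lemma transGen_lt {m : ℕ} {f : Fin m → Bool} {a b : Fin m}
    (h : Relation.TransGen (dstep (treeEdges m f)) a b) : a.val < b.val := by
  induction h with
  | single h => exact step_lt h
  | tail _ h ih => exact ih.trans (step_lt h)

lemma d_le {m : ℕ} {f : Fin m → Bool} (hf : f ∈ goodF m) {v : Fin m} (hv : v.val ≠ 0) :
    (if f v then 2 else 1) ≤ v.val := by
  by_cases hfv : f v = true
  · have h2 : ¬ v.val < 2 := fun h => by simp [hf v h] at hfv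
    simp [hfv]; omega
  · simp only [Bool.not_eq_true] at hfv
    simp [hfv]; omega

lemma exists_d {m : ℕ} {f : Fin m → Bool} (hf : f ∈ goodF m) {v : Fin m} (hv : v.val ≠ 0) :
    ∃ d : ℕ, 1 ≤ d ∧ d ≤ v.val ∧ (if f v then 2 else 1) = d :=
  ⟨if f v then 2 else 1, by split <;> omega, d_le hf hv, rfl⟩

lemma reach_root {m : ℕ} (hm : 2 ≤ m) {f : Fin m → Bool} (hf : f ∈ goodF m) :
    ∀ v : Fin m, Relation.ReflTransGen (dstep (treeEdges m f)) ⟨0, by omega⟩ v := by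
  have key : ∀ k : ℕ, ∀ v : Fin m, v.val ≤ k →
      Relation.ReflTransGen (dstep (treeEdges m f)) ⟨0, by omega⟩ v := by
    intro k
    induction k with
    | zero =>
      intro v hv
      have : v = ⟨0, by omega⟩ := Fin.ext (by simp; omega)
      rw [this]
    | succ k ih =>
      intro v hv
      by_cases h0 : v.val = 0
      · have : v = ⟨0, by omega⟩ := Fin.ext (by simp; omega)
        rw [this]
      · obtain ⟨d, hd1, hd2, hdd⟩ := exists_d hf h0
        refine Relation.ReflTransGen.tail
          (ih ⟨v.val - d, by have := v.isLt; omega⟩ (by simp; omega)) ?_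
        show (_, v) ∈ treeEdges m f
        rw [mem_treeEdges]
        simp only [hdd, Fin.val_mk]
        omega
  exact fun v => key v.val v le_rfl

lemma isStripTree_treeEdges {m : ℕ} (hm : 2 ≤ m) {f : Fin m → Bool} (hf : f ∈ goodF m) :
    IsStripTree m (treeEdges m f) := by
  refine ⟨?_, ?_, ?_, ?_, ?_⟩
  · rintro ⟨w, v⟩ h
    rw [mem_treeEdges] at h
    show v.val = w.val + 1 ∨ v.val = w.val + 2
    split at h
    · right; exact h
    · left; exact h
  · intro u v
    have hsymm : Symmetric (fun a b : Fin m =>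
        (a, b) ∈ treeEdges m f ∨ (b, a) ∈ treeEdges m f) := fun a b h => h.symm
    have hu : Relation.ReflTransGen
        (fun a b : Fin m => (a, b) ∈ treeEdges m f ∨ (b, a) ∈ treeEdges m f)
        ⟨0, by omega⟩ u := Relation.ReflTransGen.mono (fun a b h => Or.inl h) _ _ (reach_root hm hf u)
    have hv : Relation.ReflTransGen
        (fun a b : Fin m => (a, b) ∈ treeEdges m f ∨ (b, a) ∈ treeEdges m f)
        ⟨0, by omega⟩ v := Relation.ReflTransGen.mono (fun a b h => Or.inl h) _ _ (reach_root hm hf v)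
    exact ((@Relation.ReflTransGen.symmetric _ _ ⟨hsymm⟩).symm _ _ hu).trans hv
  · intro v h
    exact absurd (transGen_lt h) (lt_irrefl _)
  · intro v hv
    obtain ⟨d, hd1, hd2, hdd⟩ := exists_d hf hv
    refine ⟨⟨v.val - d, by have := v.isLt; omega⟩,
      mem_treeEdges.mpr (by simp only [hdd, Fin.val_mk]; omega), ?_⟩
    intro w hw
    have hw' := mem_treeEdges.mp hw
    simp only [hdd] at hw'
    apply Fin.ext
    simp; omega
  · intro v hv
    exact ⟨⟨0, by omega⟩, rfl, reach_root hm hf v⟩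

lemma image_eq {m : ℕ} (hm : 2 ≤ m) :
    {E : Set (Fin m × Fin m) | IsStripTree m E} = treeEdges m '' goodF m := by
  classical
  ext E
  constructor
  · rintro ⟨hsub, hconn, hacyc, huniq, hreach⟩
    refine ⟨fun v => decide (∃ w : Fin m, (w, v) ∈ E ∧ v.val = w.val + 2), ?_, ?_⟩
    · intro v hv
      simp only [decide_eq_false_iff_not]
      rintro ⟨w, _, h2⟩; omega
    · ext ⟨w, v⟩
      constructor
      · intro h
        rw [mem_treeEdges] at h
        by_cases hP : (∃ w' : Fin m, (w', v) ∈ E ∧ v.val = w'.val + 2)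
        · simp [hP] at h
          obtain ⟨w', hw', h2⟩ := hP
          have : w = w' := Fin.ext (by omega)
          rw [this]; exact hw'
        · simp [hP] at h
          have hv0 : v.val ≠ 0 := by omega
          obtain ⟨w₀, hw₀, huni⟩ := huniq v hv0
          have hstrip : v.val = w₀.val + 1 ∨ v.val = w₀.val + 2 := hsub hw₀
          rcases hstrip with h1 | h2
          · have : w = w₀ := Fin.ext (by omega)
            rw [this]; exact hw₀
          · exact absurd ⟨w₀, hw₀, h2⟩ hP
      · intro hwv
        have hstrip : v.val = w.val + 1 ∨ v.val = w.val + 2 := hsub hwv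
        rw [mem_treeEdges]
        by_cases hP : (∃ w' : Fin m, (w', v) ∈ E ∧ v.val = w'.val + 2)
        · rw [if_pos (decide_eq_true hP)]
          obtain ⟨w', hw', h2⟩ := hP
          have hv0 : v.val ≠ 0 := by omega
          obtain ⟨w₀, hw₀', huni⟩ := huniq v hv0
          rw [huni w hwv, ← huni w' hw']
          exact h2
        · rw [if_neg (by simpa using hP)]
          rcases hstrip with h1 | h2
          · exact h1
          · exact absurd ⟨w, hwv, h2⟩ hP
  · rintro ⟨f, hf, rfl⟩
    exact isStripTree_treeEdges hm hf

lemma injOn (m : ℕ) : Set.InjOn (treeEdges m) (goodF m) := by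
  intro f hf g hg h
  funext v
  by_cases hv : v.val < 2
  · rw [hf v hv, hg v hv]
  · have hv0 : v.val ≠ 0 := by omega
    cases hfv : f v with
    | false =>
      have h1 : ((⟨v.val - 1, by have := v.isLt; omega⟩ : Fin m), v) ∈ treeEdges m f :=
        mem_treeEdges.mpr (by simp [hfv]; omega)
      rw [h] at h1
      have h1' := mem_treeEdges.mp h1
      cases hgv : g v with
      | false => rfl
      | true => simp [hgv] at h1'; omega
    | true =>
      have h1 : ((⟨v.val - 2, by have := v.isLt; omega⟩ : Fin m), v) ∈ treeEdges m f :=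
        mem_treeEdges.mpr (by simp [hfv]; omega)
      rw [h] at h1
      have h1' := mem_treeEdges.mp h1
      cases hgv : g v with
      | false => simp [hgv] at h1'; omega
      | true => rfl

lemma ncard_goodF {m : ℕ} (hm : 2 ≤ m) : (goodF m).ncard = 2 ^ (m - 2) := by
  have e : ↥(goodF m) ≃ (Fin (m - 2) → Bool) :=
    { toFun := fun f i => f.1 ⟨i.val + 2, by have := i.isLt; omega⟩
      invFun := fun g => ⟨fun v => if h : 2 ≤ v.val then
          g ⟨v.val - 2, by have := v.isLt; omega⟩ else false,
        fun v hv => by dsimp only; rw [dif_neg (by omega)]⟩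
      left_inv := fun f => by
        apply Subtype.ext
        funext v
        dsimp only
        by_cases h : 2 ≤ v.val
        · rw [dif_pos h]
          exact congrArg f.1 (Fin.ext (show (v : ℕ) - 2 + 2 = (v : ℕ) by omega))
        · rw [dif_neg h]
          exact (f.2 v (by omega)).symm
      right_inv := fun g => by
        funext i
        dsimp only
        rw [dif_pos (Nat.le_add_left 2 i.val)]
        exact congrArg g (Fin.ext (show (i : ℕ) + 2 - 2 = (i : ℕ) by omega)) }
  rw [← Nat.card_coe_set_eq, Nat.card_congr e]
  simp [Nat.card_eq_fintype_card]

end StripAux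

lemma jac_add (k : ℕ) : jacobsthal k + jacobsthal (k + 1) = 2 ^ k := by
  induction k with
  | zero => rfl
  | succ k ih =>
    have h : jacobsthal (k + 2) = jacobsthal (k + 1) + 2 * jacobsthal k := rfl
    rw [show k + 1 + 1 = k + 2 from rfl, h, pow_succ]
    linarith [ih]

theorem tStrip_eq_jacobsthal (n : ℕ) (hn : 2 ≤ n) :
    tStrip n = jacobsthal (n - 2) + jacobsthal (n - 1) := by
  have h1 : tStrip n = 2 ^ (n - 2) := by
    unfold tStrip
    rw [StripAux.image_eq hn, Set.ncard_image_of_injOn (StripAux.injOn n),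
      StripAux.ncard_goodF hn]
  have h2 : jacobsthal (n - 2) + jacobsthal (n - 1) = 2 ^ (n - 2) := by
    rw [show n - 1 = n - 2 + 1 by omega]
    exact jac_add (n - 2)
  rw [h1, h2]
end

section
/- Let n ≥ 5 and let G be a weakly connected spanning closed subgraph of the directed square cycle C_n². If integers k and p with 0 ≤ p < n satisfy {e_{k−1}, f_k, f_{k+2}, ..., f_{k+2p−2}, e_{k+2p}} ⊆ E(G), then {e_k, e_{k+1}, ..., e_{k+2p−1}} ⊆ E(G). -/
open Relation Finset

section Aux

variable {n : ℕ}

lemma frame_def (n : ℕ) (i : ℤ) : frame n i = ((i : ZMod n), (i : ZMod n) + 1) := by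
  unfold frame; congr 1; push_cast; ring

lemma window_def (n : ℕ) (i : ℤ) : window n i = ((i : ZMod n), (i : ZMod n) + 2) := by
  unfold window; congr 1; push_cast; ring

lemma frame_congr {i i' : ℤ} (h : (i : ZMod n) = (i' : ZMod n)) : frame n i = frame n i' := by
  rw [frame_def, frame_def, h]

lemma window_congr {i i' : ℤ} (h : (i : ZMod n) = (i' : ZMod n)) :
    window n i = window n i' := by
  rw [window_def, window_def, h]

lemma frame_congr' {i i' : ℤ} (h : i = i') : frame n i = frame n i' := by rw [h]

lemma one_ne_two_zmod (hn : 5 ≤ n) : (1 : ZMod n) ≠ 2 := by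
  intro h
  have h2 : ((1 : ℕ) : ZMod n) = ((2 : ℕ) : ZMod n) := by exact_mod_cast h
  rw [ZMod.natCast_eq_natCast_iff, Nat.ModEq] at h2
  rw [Nat.mod_eq_of_lt (by omega), Nat.mod_eq_of_lt (by omega)] at h2
  omega

lemma zero_ne_one_zmod (hn : 5 ≤ n) : (0 : ZMod n) ≠ 1 := by
  intro h
  have h2 : ((0 : ℕ) : ZMod n) = ((1 : ℕ) : ZMod n) := by exact_mod_cast h
  rw [ZMod.natCast_eq_natCast_iff, Nat.ModEq] at h2
  rw [Nat.mod_eq_of_lt (by omega), Nat.mod_eq_of_lt (by omega)] at h2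
  omega

lemma frame_ne_window (hn : 5 ≤ n) (m : ℤ) : frame n m ≠ window n m := by
  rw [frame_def, window_def]
  intro h
  have h2 := (Prod.ext_iff.mp h).2
  exact one_ne_two_zmod hn (by linear_combination h2)

lemma frame_succ_ne_window (hn : 5 ≤ n) (m : ℤ) : frame n (m + 1) ≠ window n m := by
  rw [frame_def, window_def]
  intro h
  have h2 := (Prod.ext_iff.mp h).1
  push_cast at h2
  exact zero_ne_one_zmod hn (by linear_combination - h2)

lemma tri_full {E : Set (ZMod n × ZMod n)} (hC : IsClosedSub n E) {m : ℤ}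
    {x y : ZMod n × ZMod n} (hx : x ∈ triangleEdges n m) (hy : y ∈ triangleEdges n m)
    (hxy : x ≠ y) (hxE : x ∈ E) (hyE : y ∈ E) : triangleEdges n m ⊆ E := by
  rcases hC m with h | h
  · exact absurd (h ⟨hx, hxE⟩ ⟨hy, hyE⟩) hxy
  · exact h

lemma step_fw (hn : 5 ≤ n) {E : Set (ZMod n × ZMod n)} (hC : IsClosedSub n E) (m : ℤ)
    (hf : frame n m ∈ E) (hw : window n m ∈ E) : frame n (m + 1) ∈ E := by
  refine tri_full hC (m := m) (x := frame n m) (y := window n m) ?_ ?_ (frame_ne_window hn m) hf hw ?_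
  · exact Set.mem_insert _ _
  · simp [triangleEdges]
  · simp [triangleEdges]

lemma step_bw (hn : 5 ≤ n) {E : Set (ZMod n × ZMod n)} (hC : IsClosedSub n E) (m : ℤ)
    (hf : frame n (m + 1) ∈ E) (hw : window n m ∈ E) : frame n m ∈ E := by
  refine tri_full hC (m := m) (x := frame n (m + 1)) (y := window n m) ?_ ?_
    (frame_succ_ne_window hn m) hf hw ?_
  · simp [triangleEdges]
  · simp [triangleEdges]
  · exact Set.mem_insert _ _

end Aux
theorem wcsc_frames_lemma (n : ℕ) (hn : 5 ≤ n) (E : Set (ZMod n × ZMod n))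
    (hE : IsWCSC n E) (k : ℤ) (p : ℕ) (hp : p < n)
    (h1 : frame n (k - 1) ∈ E)
    (h2 : ∀ i : ℕ, i < p → window n (k + 2 * i) ∈ E)
    (h3 : frame n (k + 2 * p) ∈ E) :
    ∀ i : ℕ, i < 2 * p → frame n (k + i) ∈ E := by
  classical
  obtain ⟨hsub, hconn, hC⟩ := hE
  by_contra hcon
  push_neg at hcon
  obtain ⟨i0, hi0, hi0E⟩ := hcon
  -- block equivalence
  have hblock : ∀ j : ℕ, j < p →
      (frame n (k + 2 * (j : ℤ)) ∈ E ↔ frame n (k + 2 * (j : ℤ) + 1) ∈ E) := by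
    intro j hj
    have hw : window n (k + 2 * (j : ℤ)) ∈ E := h2 j hj
    exact ⟨fun h => step_fw hn hC _ h hw, fun h => step_bw hn hC _ h hw⟩
  -- a bad block exists
  have hbad : ∃ j : ℕ, j < p ∧ frame n (k + 2 * (j : ℤ)) ∉ E := by
    rcases Nat.even_or_odd i0 with ⟨j, hj⟩ | ⟨j, hj⟩
    · refine ⟨j, by omega, ?_⟩
      have heq : k + 2 * (j : ℤ) = k + (i0 : ℤ) := by omega
      rw [frame_congr' heq]; exact hi0E
    · refine ⟨j, by omega, fun h => hi0E ?_⟩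
      have := (hblock j (by omega)).mp h
      have heq : k + 2 * (j : ℤ) + 1 = k + (i0 : ℤ) := by omega
      rwa [frame_congr' heq] at this
  obtain ⟨j0, hj0p, hj0E⟩ := hbad
  set Q : ℕ → Prop := fun j => j < p ∧ frame n (k + 2 * (j : ℤ)) ∉ E with hQdef
  set jM := Nat.findGreatest Q p with hjMdef
  have hQM : Q jM := Nat.findGreatest_spec (le_of_lt hj0p) ⟨hj0p, hj0E⟩
  have hmax : ∀ m : ℕ, jM < m → m < p → frame n (k + 2 * (m : ℤ)) ∈ E := by
    intro m hm hmp
    by_contra h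
    exact Nat.findGreatest_is_greatest hm (le_of_lt hmp) ⟨hmp, h⟩
  have hex : ∃ j : ℕ, j ≤ jM ∧ ∀ l : ℕ, j ≤ l → l ≤ jM → frame n (k + 2 * (l : ℤ)) ∉ E :=
    ⟨jM, le_rfl, fun l h1 h2 => by
      have : l = jM := le_antisymm h2 h1
      rw [this]; exact hQM.2⟩
  set jm := Nat.find hex with hjmdef
  obtain ⟨hjmle, hrun⟩ := Nat.find_spec hex
  have hjmle' : jm ≤ jM := hjmdef ▸ hjmle
  -- blocks in the run are fully out
  have hnotE1 : ∀ j : ℕ, jm ≤ j → j ≤ jM → frame n (k + 2 * (j : ℤ)) ∉ E := by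
    intro j hj1 hj2
    exact hrun j (hjmdef ▸ hj1) hj2
  have hnotE2 : ∀ j : ℕ, jm ≤ j → j ≤ jM → frame n (k + 2 * (j : ℤ) + 1) ∉ E := by
    intro j hj1 hj2 h
    exact hnotE1 j hj1 hj2 ((hblock j (by omega)).mpr h)
  -- boundary frames are in E
  have hEprev : frame n (k + 2 * (jm : ℤ) - 1) ∈ E := by
    rcases Nat.eq_zero_or_pos jm with h | h
    · have heq : k - 1 = k + 2 * (jm : ℤ) - 1 := by omega
      rwa [frame_congr' heq] at h1
    · obtain ⟨j', hj'⟩ : ∃ j', jm = j' + 1 := ⟨jm - 1, by omega⟩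
      have hin : frame n (k + 2 * (j' : ℤ)) ∈ E := by
        by_contra hout
        have hle : Nat.find hex ≤ j' := by
          apply Nat.find_min' hex
          refine ⟨by omega, fun l hl1 hl2 => ?_⟩
          rcases Nat.lt_or_ge l jm with hl | hl
          · have : l = j' := by omega
            rw [this]; exact hout
          · exact hrun l (hjmdef ▸ hl) hl2
        omega
      have := (hblock j' (by omega)).mp hin
      have heq : k + 2 * (j' : ℤ) + 1 = k + 2 * (jm : ℤ) - 1 := by omega
      rwa [frame_congr' heq] at this
  have hEnext : frame n (k + 2 * (jM : ℤ) + 2) ∈ E := by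
    rcases eq_or_lt_of_le (Nat.succ_le_of_lt hQM.1) with h | h
    · have heq : k + 2 * (p : ℤ) = k + 2 * (jM : ℤ) + 2 := by omega
      rwa [frame_congr' heq] at h3
    · have := hmax (jM + 1) (by omega) h
      have heq : k + 2 * ((jM + 1 : ℕ) : ℤ) = k + 2 * (jM : ℤ) + 2 := by push_cast; ring
      rwa [frame_congr' heq] at this
  -- the isolated vertex set
  set S : Set (ZMod n) :=
    {x | ∃ j : ℕ, jm ≤ j ∧ j ≤ jM ∧ x = ((k + 2 * (j : ℤ) + 1 : ℤ) : ZMod n)} with hSdef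
  have hiso : ∀ a b : ZMod n, (a, b) ∈ E → (a ∈ S ↔ b ∈ S) := by
    intro a b hab
    obtain ⟨i, hi | hi⟩ := hsub hab
    · -- frame case: neither endpoint is in S
      rw [frame_def] at hi
      have hna : a ∉ S := by
        rintro ⟨j, hj1, hj2, rfl⟩
        have hicopy := hi
        injection hi with ha hb
        have hia : (i : ZMod n) = ((k + 2 * (j : ℤ) + 1 : ℤ) : ZMod n) := ha.symm
        rw [hicopy, ← frame_def, frame_congr hia] at hab
        exact hnotE2 j hj1 hj2 hab
      have hnb : b ∉ S := by
        rintro ⟨j, hj1, hj2, rfl⟩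
        have hicopy := hi
        injection hi with ha hb
        have hia : (i : ZMod n) = ((k + 2 * (j : ℤ) : ℤ) : ZMod n) := by
          have h' : ((k + 2 * (j : ℤ) : ℤ) : ZMod n) + 1 = (i : ZMod n) + 1 := by
            rw [← hb]; push_cast; ring
          exact (add_right_cancel h').symm
        rw [hicopy, ← frame_def, frame_congr hia] at hab
        exact hnotE1 j hj1 hj2 hab
      simp [hna, hnb]
    · -- window case
      rw [window_def] at hi
      constructor
      · rintro ⟨j, hj1, hj2, rfl⟩
        have hicopy := hi
        injection hi with ha hb
        have hia : (i : ZMod n) = ((k + 2 * (j : ℤ) + 1 : ℤ) : ZMod n) := ha.symm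
        have hwE : window n (k + 2 * (j : ℤ) + 1) ∈ E := by
          rw [hicopy, ← window_def, window_congr hia] at hab; exact hab
        rcases lt_or_eq_of_le hj2 with hj | hj
        · refine ⟨j + 1, by omega, by omega, ?_⟩
          rw [hb, ← ha]; push_cast; ring
        · exfalso
          have hfE : frame n ((k + 2 * (j : ℤ) + 1) + 1) ∈ E := by
            have heq : k + 2 * (jM : ℤ) + 2 = (k + 2 * (j : ℤ) + 1) + 1 := by omega
            rwa [frame_congr' heq] at hEnext
          have := step_bw hn hC _ hfE hwE
          exact hnotE2 j hj1 hj2 this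
      · rintro ⟨j, hj1, hj2, rfl⟩
        have hicopy := hi
        injection hi with ha hb
        have hia : (i : ZMod n) = ((k + 2 * (j : ℤ) - 1 : ℤ) : ZMod n) := by
          have h' : ((k + 2 * (j : ℤ) - 1 : ℤ) : ZMod n) + 2 = (i : ZMod n) + 2 := by
            rw [← hb]; push_cast; ring
          exact (add_right_cancel h').symm
        have hwE : window n (k + 2 * (j : ℤ) - 1) ∈ E := by
          rw [hicopy, ← window_def, window_congr hia] at hab; exact hab
        rcases lt_or_eq_of_le hj1 with hj | hj
        · obtain ⟨j', hj'⟩ : ∃ j', j = j' + 1 := ⟨j - 1, by omega⟩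
          refine ⟨j', by omega, by omega, ?_⟩
          rw [ha, hia]
          exact congrArg _ (by omega)
        · exfalso
          have hfE : frame n (k + 2 * (j : ℤ) - 1) ∈ E := by
            have heq : k + 2 * (jm : ℤ) - 1 = k + 2 * (j : ℤ) - 1 := by omega
            rwa [frame_congr' heq] at hEprev
          have := step_fw hn hC _ hfE hwE
          have heq : (k + 2 * (j : ℤ) - 1) + 1 = k + 2 * (j : ℤ) := by ring
          rw [frame_congr' heq] at this
          exact hnotE1 j hj1 hj2 this
  -- S is closed under reachability but is not everything
  have hSsmall : S ≠ Set.univ := by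
    intro hSuniv
    have himg : S = (fun j : ℕ => ((k + 2 * (j : ℤ) + 1 : ℤ) : ZMod n)) '' Set.Icc jm jM := by
      ext x
      simp only [hSdef, Set.mem_setOf_eq, Set.mem_image, Set.mem_Icc]
      constructor
      · rintro ⟨j, ha, hb, hc⟩; exact ⟨j, ⟨ha, hb⟩, hc.symm⟩
      · rintro ⟨j, ⟨ha, hb⟩, hc⟩; exact ⟨j, ha, hb, hc.symm⟩
    have hcard : S.ncard ≤ (Set.Icc jm jM).ncard := by
      rw [himg]
      exact Set.ncard_image_le (Set.finite_Icc _ _)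
    have hIcc : (Set.Icc jm jM).ncard = jM + 1 - jm := by
      rw [← Finset.coe_Icc, Set.ncard_coe_finset, Nat.card_Icc]
    have huniv : (Set.univ : Set (ZMod n)).ncard = n := by
      rw [Set.ncard_univ, Nat.card_zmod]
    rw [hSuniv, huniv, hIcc] at hcard
    have : jM < p := hQM.1
    omega
  obtain ⟨w, hw⟩ : ∃ w : ZMod n, w ∉ S := by
    by_contra h
    push_neg at h
    exact hSsmall (Set.eq_univ_of_forall h)
  have hv0 : ((k + 2 * (jM : ℤ) + 1 : ℤ) : ZMod n) ∈ S := ⟨jM, hjmle', le_rfl, rfl⟩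
  have hreach := hconn ((k + 2 * (jM : ℤ) + 1 : ℤ) : ZMod n) w
  have hwS : w ∈ S := by
    clear hw
    induction hreach with
    | refl => exact hv0
    | tail h1 h2 ih =>
      rcases h2 with h | h
      · exact (hiso _ _ h).mp ih
      · exact (hiso _ _ h).mpr ih
  exact hw hwS
end

section
/- Let n ≥ 5 and let G be a nontrivial weakly connected spanning closed subgraph of the directed square cycle C_n². If E(G) contains no frame e_i, then n is odd and E(G) equals the set of all windows minus a single window f_j for some 0 ≤ j ≤ n−1. -/
open Relation Finset

theorem wcsc_no_frame (n : ℕ) (hn : 5 ≤ n) (E : Set (ZMod n × ZMod n))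
    (hE : IsWCSC n E) (hnt : NontrivialSub n E)
    (hf : ∀ i : ℤ, frame n i ∉ E) :
    Odd n ∧ ∃ j : ℕ, j ≤ n - 1 ∧ E = windowsSet n \ {window n (j : ℤ)} := by
  haveI : NeZero n := ⟨by omega⟩
  haveI : Fact (1 < n) := ⟨by omega⟩
  obtain ⟨hsub, hconn, -⟩ := hE
  obtain ⟨-, hnw⟩ := hnt
  -- every window is of the form (x, x+2)
  have hwchar : ∀ i : ℤ, window n i = ((i : ZMod n), (i : ZMod n) + 2) := by
    intro i
    unfold window
    push_cast
    rfl
  -- every edge of E is a window (x, x+2)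
  have hwin : ∀ p ∈ E, ∃ x : ZMod n, p = (x, x + 2) := by
    intro p hp
    obtain ⟨i, hi | hi⟩ := hsub hp
    · exact absurd (hi ▸ hp) (hf i)
    · exact ⟨(i : ZMod n), by rw [hi, hwchar]⟩
  have hwinmem : ∀ x : ZMod n, (x, x + 2) ∈ windowsSet n := by
    intro x
    refine ⟨(x.val : ℤ), ?_⟩
    rw [hwchar]
    push_cast
    rw [ZMod.natCast_rightInverse x]
  have hEw : E ⊆ windowsSet n := by
    intro p hp
    obtain ⟨x, rfl⟩ := hwin p hp
    exact hwinmem x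
  have hwinchar : ∀ p ∈ windowsSet n, ∃ x : ZMod n, p = (x, x + 2) := by
    rintro p ⟨i, rfl⟩
    exact ⟨(i : ZMod n), hwchar i⟩
  -- n is odd
  have hodd : n % 2 = 1 := by
    by_contra hpar
    have h2 : 2 ∣ n := by omega
    set φ := ZMod.castHom h2 (ZMod 2) with hφ
    have hφ2 : ∀ x : ZMod n, φ (x + 2) = φ x := by
      intro x
      have h20 : (2 : ZMod 2) = 0 := by decide
      rw [map_add, map_ofNat, h20, add_zero]
    have key : ∀ u v : ZMod n,
        Relation.ReflTransGen (fun a b => (a, b) ∈ E ∨ (b, a) ∈ E) u v → φ u = φ v := by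
      intro u v h
      induction h with
      | refl => rfl
      | @tail p q _ hbc ih =>
        rcases hbc with h1 | h1
        · obtain ⟨x, hx⟩ := hwin _ h1
          rw [Prod.mk.injEq] at hx
          rw [ih, hx.1, hx.2, hφ2]
        · obtain ⟨x, hx⟩ := hwin _ h1
          rw [Prod.mk.injEq] at hx
          rw [ih, hx.2, hφ2, hx.1]
    have h01 := key 0 1 (hconn 0 1)
    rw [map_zero, map_one] at h01
    exact absurd h01 (by decide)
  -- inverse of 2 mod n
  set c : ZMod n := (((n + 1) / 2 : ℕ) : ZMod n) with hc
  have h2c : (2 : ZMod n) * c = 1 := by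
    have h1 : 2 * ((n + 1) / 2) = n + 1 := by omega
    rw [hc, show (2 : ZMod n) = ((2 : ℕ) : ZMod n) from by push_cast; rfl,
      ← Nat.cast_mul, h1]
    push_cast
    simp [ZMod.natCast_self]
  have hcinj : ∀ y z : ZMod n, c * y = c * z → y = z := by
    intro y z h
    have h2 : (2 * c) * y = (2 * c) * z := by rw [mul_assoc, mul_assoc, h]
    rwa [h2c, one_mul, one_mul] at h2
  -- there is a missing window
  have hssub : E ⊂ windowsSet n := ⟨hEw, fun h => hnw (le_antisymm hEw h)⟩
  obtain ⟨p0, hp0w, hp0e⟩ := Set.exists_of_ssubset hssub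
  obtain ⟨x0, rfl⟩ := hwinchar p0 hp0w
  -- uniqueness of the missing window
  have huniq : ∀ x1 : ZMod n, (x1, x1 + 2) ∉ E → x1 = x0 := by
    intro x1 h1
    by_contra hne
    set a : ZMod n := c * x0 with ha
    set b : ZMod n := c * x1 with hb
    have hab : a ≠ b := fun h => hne (hcinj _ _ h.symm)
    set d : ℕ := (b - a).val with hd
    have hd0 : d ≠ 0 := by
      rw [hd, Ne, ZMod.val_eq_zero, sub_eq_zero]
      exact fun h => hab h.symm
    have hdn : d < n := ZMod.val_lt _
    set g : ZMod n → Prop := fun z => 1 ≤ (z - a).val ∧ (z - a).val ≤ d with hg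
    have hgstep : ∀ z : ZMod n, z ≠ a → z ≠ b → (g z ↔ g (z + 1)) := by
      intro z hza hzb
      have ht : (z + 1 - a).val = ((z - a).val + 1) % n := by
        rw [show z + 1 - a = (z - a) + 1 from by ring, ZMod.val_add, ZMod.val_one]
      have h1 : (z - a).val ≠ 0 := by
        rw [Ne, ZMod.val_eq_zero, sub_eq_zero]; exact hza
      have h2 : (z - a).val ≠ d := by
        intro h
        rw [hd] at h
        exact hzb (by have := ZMod.val_injective n h; rwa [sub_left_inj] at this)
      have h3 : (z - a).val < n := ZMod.val_lt _
      have ht' : (z + 1 - a).val = (z - a).val + 1 ∨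
          ((z - a).val = n - 1 ∧ (z + 1 - a).val = 0) := by
        rw [ht]
        rcases Nat.lt_or_ge ((z - a).val + 1) n with h | h
        · exact Or.inl (Nat.mod_eq_of_lt h)
        · have he : (z - a).val + 1 = n := by omega
          exact Or.inr ⟨by omega, by rw [he, Nat.mod_self]⟩
      rw [hg]
      rcases ht' with h | ⟨h4, h5⟩
      · simp only [h]; omega
      · simp only [h4, h5]; omega
    have hGstep : ∀ u v : ZMod n,
        Relation.ReflTransGen (fun s t => (s, t) ∈ E ∨ (t, s) ∈ E) u v →
          (g (c * u) ↔ g (c * v)) := by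
      intro u v h
      induction h with
      | refl => exact Iff.rfl
      | @tail p q _ hbc ih =>
        rcases hbc with hmem | hmem
        · obtain ⟨x, hx⟩ := hwin _ hmem
          rw [hx] at hmem
          rw [Prod.mk.injEq] at hx
          have hxx0 : x ≠ x0 := fun h => hp0e (h ▸ hmem)
          have hxx1 : x ≠ x1 := fun h => h1 (h ▸ hmem)
          have hza : c * x ≠ a := fun h => hxx0 (hcinj _ _ h)
          have hzb : c * x ≠ b := fun h => hxx1 (hcinj _ _ h)
          have hnext : c * (x + 2) = c * x + 1 := by
            rw [mul_add, mul_comm c 2, h2c]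
          refine ih.trans ?_
          rw [hx.1, hx.2, hnext]
          exact hgstep (c * x) hza hzb
        · obtain ⟨x, hx⟩ := hwin _ hmem
          rw [hx] at hmem
          rw [Prod.mk.injEq] at hx
          have hxx0 : x ≠ x0 := fun h => hp0e (h ▸ hmem)
          have hxx1 : x ≠ x1 := fun h => h1 (h ▸ hmem)
          have hza : c * x ≠ a := fun h => hxx0 (hcinj _ _ h)
          have hzb : c * x ≠ b := fun h => hxx1 (hcinj _ _ h)
          have hnext : c * (x + 2) = c * x + 1 := by
            rw [mul_add, mul_comm c 2, h2c]
          refine ih.trans ?_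
          rw [hx.1, hx.2, hnext]
          exact (hgstep (c * x) hza hzb).symm
    have key := hGstep (x0 + 2) (x1 + 2) (hconn (x0 + 2) (x1 + 2))
    have hca : c * (x0 + 2) = a + 1 := by rw [mul_add, mul_comm c 2, h2c, ha]
    have hcb : c * (x1 + 2) = b + 1 := by rw [mul_add, mul_comm c 2, h2c, hb]
    rw [hca, hcb] at key
    have hga : g (a + 1) := by
      rw [hg]
      have : a + 1 - a = 1 := by ring
      simp only [this, ZMod.val_one]
      omega
    have hgb : ¬ g (b + 1) := by
      have hbb : (b + 1 - a).val = (d + 1) % n := by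
        rw [show b + 1 - a = (b - a) + 1 from by ring, ZMod.val_add, ZMod.val_one, hd]
      have hcases : (b + 1 - a).val = d + 1 ∨ (b + 1 - a).val = 0 := by
        rw [hbb]
        rcases Nat.lt_or_ge (d + 1) n with h | h
        · exact Or.inl (Nat.mod_eq_of_lt h)
        · have hdd : d + 1 = n := by omega
          exact Or.inr (by rw [hdd, Nat.mod_self])
      rw [hg]
      rcases hcases with h | h <;> simp only [h] <;> omega
    exact hgb (key.mp hga)
  -- conclusion
  refine ⟨Nat.odd_iff.mpr hodd, x0.val, by have := ZMod.val_lt x0; omega, ?_⟩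
  have hwj : window n ((x0.val : ℕ) : ℤ) = (x0, x0 + 2) := by
    rw [hwchar]
    push_cast
    rw [ZMod.natCast_rightInverse x0]
  ext p
  constructor
  · intro hp
    refine ⟨hEw hp, ?_⟩
    intro hmem
    rw [Set.mem_singleton_iff] at hmem
    rw [hmem, hwj] at hp
    exact hp0e hp
  · rintro ⟨hpw, hpne⟩
    obtain ⟨x, rfl⟩ := hwinchar p hpw
    by_contra hpe
    have hx := huniq x hpe
    exact hpne (by rw [Set.mem_singleton_iff, hx, hwj])
end

section
/- Let n ≥ 5 and let G be a nontrivial weakly connected spanning closed subgraph of the directed square cycle C_n². If E(G) contains at least one frame, then G equals the directed strip graph with tails S_{n,k,j} for some integers j, k with 0 ≤ j ≤ n−1 and 0 ≤ k ≤ ⌊(n−2)/2⌋. -/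
open Relation Finset

namespace WCSCAux

variable {n : ℕ}

lemma cut_lemma {V : Type*} {E : Set (V × V)} {S : Set V}
    (hstep : ∀ p ∈ E, (p.1 ∈ S ↔ p.2 ∈ S)) {u v : V}
    (h : Relation.ReflTransGen (fun a b => (a, b) ∈ E ∨ (b, a) ∈ E) u v) :
    (u ∈ S ↔ v ∈ S) := by
  induction h with
  | refl => exact Iff.rfl
  | @tail b c h1 h2 ih =>
    rcases h2 with h2 | h2
    · exact ih.trans (hstep _ h2)
    · exact ih.trans (hstep _ h2).symm

lemma one_lt : 5 ≤ n → (1:ℕ) < n := by omega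

lemma val_one' (hn : 5 ≤ n) : (1 : ZMod n).val = 1 := by
  haveI : NeZero n := ⟨by omega⟩
  have := ZMod.val_cast_of_lt (show (1:ℕ) < n by omega)
  simpa using this

lemma val_two' (hn : 5 ≤ n) : (2 : ZMod n).val = 2 := by
  haveI : NeZero n := ⟨by omega⟩
  have := ZMod.val_cast_of_lt (show (2:ℕ) < n by omega)
  simpa using this

lemma one_ne_zero' (hn : 5 ≤ n) : (1 : ZMod n) ≠ 0 := by
  haveI : NeZero n := ⟨by omega⟩
  intro h
  have := congrArg ZMod.val h
  rw [val_one' hn, ZMod.val_zero] at this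
  omega

lemma two_ne_zero' (hn : 5 ≤ n) : (2 : ZMod n) ≠ 0 := by
  haveI : NeZero n := ⟨by omega⟩
  intro h
  have := congrArg ZMod.val h
  rw [val_two' hn, ZMod.val_zero] at this
  omega

lemma one_ne_two' (hn : 5 ≤ n) : (1 : ZMod n) ≠ 2 := by
  intro h
  have : (1:ZMod n) - 2 = 0 := by rw [h]; ring
  have h2 : (-1 : ZMod n) = 0 := by linear_combination this
  have := one_ne_zero' hn
  apply this
  linear_combination -h2

/-- key identity: `s + ofs x = x` -/
lemma add_val_sub (hn : 5 ≤ n) (s x : ZMod n) : s + (((x - s).val : ℕ) : ZMod n) = x := by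
  haveI : NeZero n := ⟨by omega⟩
  rw [ZMod.natCast_rightInverse (x - s)]; ring

lemma val_sub_lt (hn : 5 ≤ n) (s x : ZMod n) : (x - s).val < n := by
  haveI : NeZero n := ⟨by omega⟩
  exact ZMod.val_lt _

/-- `ofs (x+1) = (ofs x + 1) % n` -/
lemma ofs_succ (hn : 5 ≤ n) (s x : ZMod n) :
    (x + 1 - s).val = ((x - s).val + 1) % n := by
  haveI : NeZero n := ⟨by omega⟩
  have : x + 1 - s = (x - s) + 1 := by ring
  rw [this, ZMod.val_add, val_one' hn]

lemma ofs_add2 (hn : 5 ≤ n) (s x : ZMod n) :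
    (x + 2 - s).val = ((x - s).val + 2) % n := by
  haveI : NeZero n := ⟨by omega⟩
  have : x + 2 - s = (x - s) + 2 := by ring
  rw [this, ZMod.val_add, val_two' hn]

lemma cast_mod (hn : 5 ≤ n) (m : ℕ) : ((m % n : ℕ) : ZMod n) = (m : ZMod n) := by
  conv_rhs => rw [← Nat.mod_add_div m n]
  push_cast [ZMod.natCast_self]
  ring

lemma cast_nm1 (hn : 5 ≤ n) : ((n - 1 : ℕ) : ZMod n) = -1 := by
  have : ((n:ℕ) : ZMod n) = 0 := ZMod.natCast_self n
  rw [Nat.cast_sub (by omega), this, Nat.cast_one]; ring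

lemma succ_mod (hn : 5 ≤ n) {m : ℕ} (hm : m < n) :
    (m + 1) % n = if m + 1 = n then 0 else m + 1 := by
  split_ifs with h
  · simp [h]
  · exact Nat.mod_eq_of_lt (by omega)

lemma add2_mod (hn : 5 ≤ n) {m : ℕ} (hm : m < n) :
    (m + 2) % n = if m + 2 = n then 0 else if m + 2 = n + 1 then 1 else m + 2 := by
  split_ifs with h h'
  · simp [h]
  · have h2 : m + 2 = n + 1 := h'
    have : n + 1 = 1 + n * 1 := by omega
    rw [h2, this, Nat.add_mul_mod_self_left]
    exact Nat.mod_eq_of_lt (by omega)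
  · exact Nat.mod_eq_of_lt (by omega)


/-- Master cut lemma in offset coordinates relative to base point `s`. -/
lemma offset_cut (hn : 5 ≤ n) (E : Set (ZMod n × ZMod n))
    (hshape : ∀ p ∈ E, p.2 = p.1 + 1 ∨ p.2 = p.1 + 2)
    (hconn : weaklyConnected E) (s : ZMod n) (Sm : ℕ → Prop)
    (hSf : ∀ m, m < n → (s + (m:ZMod n), s + (m:ZMod n) + 1) ∈ E → (Sm m ↔ Sm ((m + 1) % n)))
    (hSw : ∀ m, m < n → (s + (m:ZMod n), s + (m:ZMod n) + 2) ∈ E → (Sm m ↔ Sm ((m + 2) % n)))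
    (m₀ : ℕ) (hm₀ : m₀ < n) (h0 : ¬ Sm 0) (h1 : Sm m₀) : False := by
  haveI : NeZero n := ⟨by omega⟩
  set S : Set (ZMod n) := {x | Sm (x - s).val} with hS
  have hstep : ∀ p ∈ E, (p.1 ∈ S ↔ p.2 ∈ S) := by
    intro p hp
    obtain ⟨x, y⟩ := p
    have hx : s + (((x - s).val : ℕ) : ZMod n) = x := add_val_sub hn s x
    rcases hshape _ hp with h | h
    · simp only at h; subst h
      have hmem : (s + (((x - s).val : ℕ) : ZMod n), s + (((x - s).val : ℕ) : ZMod n) + 1) ∈ E := by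
        rw [hx]; exact hp
      have := hSf _ (val_sub_lt hn s x) hmem
      simpa [hS, Set.mem_setOf_eq, ofs_succ hn s x] using this
    · simp only at h; subst h
      have hmem : (s + (((x - s).val : ℕ) : ZMod n), s + (((x - s).val : ℕ) : ZMod n) + 2) ∈ E := by
        rw [hx]; exact hp
      have := hSw _ (val_sub_lt hn s x) hmem
      simpa [hS, Set.mem_setOf_eq, ofs_add2 hn s x] using this
  have hiff := cut_lemma hstep (hconn (s + (m₀ : ZMod n)) s)
  have e1 : (s + (m₀ : ZMod n) - s).val = m₀ := by
    rw [show s + (m₀ : ZMod n) - s = (m₀ : ZMod n) by ring, ZMod.val_cast_of_lt hm₀]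
  have e0 : (s - s).val = 0 := by rw [sub_self, ZMod.val_zero]
  rw [hS] at hiff
  simp only [Set.mem_setOf_eq, e1, e0] at hiff
  exact h0 (hiff.mp h1)


/-- Any maximal gap of missing frames has odd length. -/
lemma oddGap (hn : 5 ≤ n) (E : Set (ZMod n × ZMod n))
    (hshape : ∀ p ∈ E, p.2 = p.1 + 1 ∨ p.2 = p.1 + 2)
    (hC2 : ∀ a b c : ZMod n, b = a + 1 → c = a + 2 → (a, b) ∈ E → (a, c) ∈ E → (b, c) ∈ E)
    (hC3 : ∀ a b c : ZMod n, b = a + 1 → c = a + 2 → (b, c) ∈ E → (a, c) ∈ E → (a, b) ∈ E)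
    (hconn : weaklyConnected E)
    (s : ZMod n) (L : ℕ) (hL1 : 1 ≤ L) (hLn : L ≤ n - 1)
    (hgap : ∀ m : ℕ, m < L → (s + (m:ZMod n), s + (m:ZMod n) + 1) ∉ E)
    (hsm : (s - 1, s) ∈ E)
    (hsL : (s + (L:ZMod n), s + (L:ZMod n) + 1) ∈ E) :
    L % 2 = 1 := by
  have hw_left : (s - 1, s + 1) ∉ E := by
    intro h
    have h2 := hC2 (s-1) s (s+1) (by ring) (by ring) hsm h
    exact hgap 0 hL1 (by simpa using h2)
  have hw_right : (s + ((L-1:ℕ):ZMod n), s + ((L-1:ℕ):ZMod n) + 2) ∉ E := by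
    intro h
    have hb : s + ((L-1:ℕ):ZMod n) + 1 = s + (L : ZMod n) := by
      rw [Nat.cast_sub hL1]; push_cast; ring
    have hfr : (s + ((L-1:ℕ):ZMod n) + 1, s + ((L-1:ℕ):ZMod n) + 1 + 1) ∈ E := by
      rw [hb]; exact hsL
    have h3 := hC3 (s + ((L-1:ℕ):ZMod n)) (s + ((L-1:ℕ):ZMod n) + 1)
      (s + ((L-1:ℕ):ZMod n) + 2) rfl (by ring) (by rw [hb]; rw [hb] at hfr; convert hsL using 2; rw [← hb]; ring) h
    exact hgap (L-1) (by omega) h3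
  by_contra hodd
  have hL2 : L % 2 = 0 := by omega
  refine offset_cut hn E hshape hconn s (fun m => m % 2 = 1 ∧ m < L) ?_ ?_ 1 (by omega)
    (by simp) ⟨by omega, by omega⟩
  · intro m hm hf
    have hnl : ¬ m < L := fun h => hgap m h hf
    rw [succ_mod hn hm]; split_ifs <;> simp -failIfUnchanged only [false_and, iff_false] <;> omega
  · intro m hm hw
    have h1 : m ≠ n - 1 := by
      rintro rfl
      apply hw_left
      have e : s + ((n-1:ℕ):ZMod n) = s - 1 := by rw [cast_nm1 hn]; ring
      rw [e] at hw
      have e2 : s - 1 + 2 = s + 1 := by ring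
      rwa [e2] at hw
    have h2 : m ≠ L - 1 := by rintro rfl; exact hw_right hw
    rw [add2_mod hn hm]; split_ifs <;> simp -failIfUnchanged only [false_and, iff_false] <;> omega


/-- All internal windows of the gap are present. -/
lemma gapWindows (hn : 5 ≤ n) (E : Set (ZMod n × ZMod n))
    (hshape : ∀ p ∈ E, p.2 = p.1 + 1 ∨ p.2 = p.1 + 2)
    (hC2 : ∀ a b c : ZMod n, b = a + 1 → c = a + 2 → (a, b) ∈ E → (a, c) ∈ E → (b, c) ∈ E)
    (hC3 : ∀ a b c : ZMod n, b = a + 1 → c = a + 2 → (b, c) ∈ E → (a, c) ∈ E → (a, b) ∈ E)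
    (hconn : weaklyConnected E)
    (s : ZMod n) (L : ℕ) (hL1 : 1 ≤ L) (hLn : L ≤ n - 1) (hLodd : L % 2 = 1)
    (hgap : ∀ m : ℕ, m < L → (s + (m:ZMod n), s + (m:ZMod n) + 1) ∉ E)
    (hsm : (s - 1, s) ∈ E)
    (hsL : (s + (L:ZMod n), s + (L:ZMod n) + 1) ∈ E)
    (i : ℕ) (hi : i + 2 ≤ L) :
    (s + (i:ZMod n), s + (i:ZMod n) + 2) ∈ E := by
  by_contra hiw
  have hw_left : (s - 1, s + 1) ∉ E := by
    intro h
    have h2 := hC2 (s-1) s (s+1) (by ring) (by ring) hsm h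
    exact hgap 0 hL1 (by simpa using h2)
  have hw_right : (s + ((L-1:ℕ):ZMod n), s + ((L-1:ℕ):ZMod n) + 2) ∉ E := by
    intro h
    have hb : s + ((L-1:ℕ):ZMod n) + 1 = s + (L : ZMod n) := by
      rw [Nat.cast_sub hL1]; push_cast; ring
    have h3 := hC3 (s + ((L-1:ℕ):ZMod n)) (s + ((L-1:ℕ):ZMod n) + 1)
      (s + ((L-1:ℕ):ZMod n) + 2) rfl (by ring)
      (by rw [hb]; convert hsL using 2; rw [← hb]; ring) h
    exact hgap (L-1) (by omega) h3
  rcases Nat.even_or_odd i with hieven | hiodd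
  · have hie : i % 2 = 0 := Nat.even_iff.mp hieven
    refine offset_cut hn E hshape hconn s (fun m => m % 2 = 0 ∧ i + 2 ≤ m ∧ m ≤ L - 1)
      ?_ ?_ (i + 2) (by omega) (by omega) ⟨by omega, by omega, by omega⟩
    · intro m hm hf
      have hnl : ¬ m < L := fun h => hgap m h hf
      rw [succ_mod hn hm]; split_ifs <;> omega
    · intro m hm hw
      have h1 : m ≠ n - 1 := by
        rintro rfl
        apply hw_left
        have e : s + ((n-1:ℕ):ZMod n) = s - 1 := by rw [cast_nm1 hn]; ring
        rw [e] at hw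
        have e2 : s - 1 + 2 = s + 1 := by ring
        rwa [e2] at hw
      have h2 : m ≠ L - 1 := by rintro rfl; exact hw_right hw
      have h3 : m ≠ i := by rintro rfl; exact hiw hw
      rw [add2_mod hn hm]; split_ifs <;> omega
  · have hio : i % 2 = 1 := Nat.odd_iff.mp hiodd
    refine offset_cut hn E hshape hconn s (fun m => m % 2 = 1 ∧ 1 ≤ m ∧ m ≤ i)
      ?_ ?_ i (by omega) (by omega) ⟨by omega, by omega, by omega⟩
    · intro m hm hf
      have hnl : ¬ m < L := fun h => hgap m h hf
      rw [succ_mod hn hm]; split_ifs <;> omega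
    · intro m hm hw
      have h1 : m ≠ n - 1 := by
        rintro rfl
        apply hw_left
        have e : s + ((n-1:ℕ):ZMod n) = s - 1 := by rw [cast_nm1 hn]; ring
        rw [e] at hw
        have e2 : s - 1 + 2 = s + 1 := by ring
        rwa [e2] at hw
      have h2 : m ≠ L - 1 := by rintro rfl; exact hw_right hw
      have h3 : m ≠ i := by rintro rfl; exact hiw hw
      rw [add2_mod hn hm]; split_ifs <;> omega


/-- There is only one gap: all frames outside `[s, s+L-1]` are present. -/
lemma singleGap (hn : 5 ≤ n) (E : Set (ZMod n × ZMod n))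
    (hshape : ∀ p ∈ E, p.2 = p.1 + 1 ∨ p.2 = p.1 + 2)
    (hC2 : ∀ a b c : ZMod n, b = a + 1 → c = a + 2 → (a, b) ∈ E → (a, c) ∈ E → (b, c) ∈ E)
    (hC3 : ∀ a b c : ZMod n, b = a + 1 → c = a + 2 → (b, c) ∈ E → (a, c) ∈ E → (a, b) ∈ E)
    (hconn : weaklyConnected E)
    (s : ZMod n) (L : ℕ) (hL1 : 1 ≤ L) (hLn : L ≤ n - 1) (hLodd : L % 2 = 1)
    (hgap : ∀ m : ℕ, m < L → (s + (m:ZMod n), s + (m:ZMod n) + 1) ∉ E)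
    (hsm : (s - 1, s) ∈ E)
    (hsL : (s + (L:ZMod n), s + (L:ZMod n) + 1) ∈ E) :
    ∀ m : ℕ, L ≤ m → m < n → (s + (m:ZMod n), s + (m:ZMod n) + 1) ∈ E := by
  classical
  by_contra hcon
  push_neg at hcon
  obtain ⟨m₁, hm₁L, hm₁n, hm₁⟩ := hcon
  have hex : ∃ m, L ≤ m ∧ m < n ∧ (s + (m:ZMod n), s + (m:ZMod n) + 1) ∉ E :=
    ⟨m₁, hm₁L, hm₁n, hm₁⟩
  set a := Nat.find hex with ha
  obtain ⟨haL, han, haf⟩ := Nat.find_spec hex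
  have hamin : ∀ m, m < a → L ≤ m → m < n →
      (s + (m:ZMod n), s + (m:ZMod n) + 1) ∈ E := by
    intro m hm h1 h2
    by_contra hc
    exact Nat.find_min hex hm ⟨h1, h2, hc⟩
  have hfn1 : (s + ((n-1:ℕ):ZMod n), s + ((n-1:ℕ):ZMod n) + 1) ∈ E := by
    have e : s + ((n-1:ℕ):ZMod n) = s - 1 := by rw [cast_nm1 hn]; ring
    rw [e, show s - 1 + 1 = s by ring]
    exact hsm
  have haL' : L < a := by
    rcases Nat.lt_or_ge L a with h | h
    · exact h
    · exfalso; apply haf; have h2 : a = L := by omega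
      rw [← ha, h2]; exact hsL
  have han1 : a < n - 1 := by
    rcases Nat.lt_or_ge a (n-1) with h | h
    · exact h
    · exfalso; apply haf; have h2 : a = n - 1 := by omega
      rw [← ha, h2]; exact hfn1
  have hexc : ∃ m, a < m ∧ m < n ∧ (s + (m:ZMod n), s + (m:ZMod n) + 1) ∈ E :=
    ⟨n - 1, by omega, by omega, hfn1⟩
  set c := Nat.find hexc with hc
  obtain ⟨hca, hcn, hcf⟩ := Nat.find_spec hexc
  have habs : ∀ m, a ≤ m → m < c → (s + (m:ZMod n), s + (m:ZMod n) + 1) ∉ E := by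
    intro m h1 h2 hmem
    rcases Nat.eq_or_lt_of_le h1 with h | h
    · rw [← h] at hmem; exact haf hmem
    · exact Nat.find_min hexc h2 ⟨h, by omega, hmem⟩
  -- gap2 is odd
  have hodd2 : (c - a) % 2 = 1 := by
    apply oddGap hn E hshape hC2 hC3 hconn (s + (a:ZMod n)) (c - a) (by omega) (by omega)
    · intro m hm
      have e : s + (a:ZMod n) + (m:ZMod n) = s + ((a+m:ℕ):ZMod n) := by push_cast; ring
      rw [e]
      exact habs (a+m) (by omega) (by omega)
    · have e2 : s + ((a-1:ℕ):ZMod n) = s + (a:ZMod n) - 1 := by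
        rw [Nat.cast_sub (by omega : 1 ≤ a)]; push_cast; ring
      have := hamin (a-1) (by omega) (by omega) (by omega)
      rw [e2] at this
      rwa [show s + (a:ZMod n) - 1 + 1 = s + (a:ZMod n) by ring] at this
    · have e3 : s + (a:ZMod n) + ((c-a:ℕ):ZMod n) = s + ((c:ℕ):ZMod n) := by
        rw [Nat.cast_sub (by omega : a ≤ c)]; push_cast; ring
      rw [e3]
      exact hcf
  -- forced absent windows
  have hw_left : (s - 1, s + 1) ∉ E := by
    intro h
    have h2 := hC2 (s-1) s (s+1) (by ring) (by ring) hsm h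
    exact hgap 0 hL1 (by simpa using h2)
  have hw_right : (s + ((L-1:ℕ):ZMod n), s + ((L-1:ℕ):ZMod n) + 2) ∉ E := by
    intro h
    have hb : s + ((L-1:ℕ):ZMod n) + 1 = s + (L : ZMod n) := by
      rw [Nat.cast_sub hL1]; push_cast; ring
    have h3 := hC3 (s + ((L-1:ℕ):ZMod n)) (s + ((L-1:ℕ):ZMod n) + 1)
      (s + ((L-1:ℕ):ZMod n) + 2) rfl (by ring)
      (by rw [hb]; convert hsL using 2; rw [← hb]; ring) h
    exact hgap (L-1) (by omega) h3
  have hw_a1 : (s + ((a-1:ℕ):ZMod n), s + ((a-1:ℕ):ZMod n) + 2) ∉ E := by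
    intro h
    have hb : s + ((a-1:ℕ):ZMod n) + 1 = s + (a : ZMod n) := by
      rw [Nat.cast_sub (by omega : 1 ≤ a)]; push_cast; ring
    have h2 := hC2 (s + ((a-1:ℕ):ZMod n)) (s + ((a-1:ℕ):ZMod n) + 1)
      (s + ((a-1:ℕ):ZMod n) + 2) rfl (by ring)
      (hamin (a-1) (by omega) (by omega) (by omega)) h
    rw [hb] at h2
    apply haf
    convert h2 using 2
    rw [← hb]; ring
  have hw_c1 : (s + ((c-1:ℕ):ZMod n), s + ((c-1:ℕ):ZMod n) + 2) ∉ E := by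
    intro h
    have hb : s + ((c-1:ℕ):ZMod n) + 1 = s + (c : ZMod n) := by
      rw [Nat.cast_sub (by omega : 1 ≤ c)]; push_cast; ring
    have h3 := hC3 (s + ((c-1:ℕ):ZMod n)) (s + ((c-1:ℕ):ZMod n) + 1)
      (s + ((c-1:ℕ):ZMod n) + 2) rfl (by ring)
      (by rw [hb]; convert hcf using 2; rw [← hb]; ring) h
    exact habs (c-1) (by omega) (by omega) h3
  -- the big cut
  refine offset_cut hn E hshape hconn s
    (fun m => 1 ≤ m ∧ m ≤ c - 1 ∧ ¬(m < L ∧ m % 2 = 0) ∧ ¬(a + 1 ≤ m ∧ (c - m) % 2 = 0))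
    ?_ ?_ L (by omega) (by omega) ⟨by omega, by omega, by omega, by omega⟩
  · intro m hm hf
    have hnl : ¬ m < L := fun h => hgap m h hf
    have hng2 : ¬(a ≤ m ∧ m < c) := fun ⟨h1, h2⟩ => habs m h1 h2 hf
    rw [succ_mod hn hm]; split_ifs <;> omega
  · intro m hm hw
    have h1 : m ≠ n - 1 := by
      rintro rfl
      apply hw_left
      have e : s + ((n-1:ℕ):ZMod n) = s - 1 := by rw [cast_nm1 hn]; ring
      rw [e] at hw
      rwa [show s - 1 + 2 = s + 1 by ring] at hw
    have h2 : m ≠ L - 1 := by rintro rfl; exact hw_right hw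
    have h3 : m ≠ a - 1 := by rintro rfl; exact hw_a1 hw
    have h4 : m ≠ c - 1 := by rintro rfl; exact hw_c1 hw
    rw [add2_mod hn hm]; split_ifs <;> omega

end WCSCAux


open WCSCAux in
theorem wcsc_with_frame (n : ℕ) (hn : 5 ≤ n) (E : Set (ZMod n × ZMod n))
    (hE : IsWCSC n E) (hnt : NontrivialSub n E)
    (hfr : ∃ i : ℤ, frame n i ∈ E) :
    ∃ j k : ℕ, j ≤ n - 1 ∧ k ≤ (n - 2) / 2 ∧ E = stripTailEdges n (k : ℤ) (j : ℤ) := by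
  classical
  haveI : NeZero n := ⟨by omega⟩
  obtain ⟨hsub, hconn, hcl⟩ := hE
  -- normalizations
  have hfr_eq : ∀ i : ℤ, frame n i = ((i : ZMod n), (i : ZMod n) + 1) := by
    intro i; unfold frame; congr 1; push_cast; ring
  have hwi_eq : ∀ i : ℤ, window n i = ((i : ZMod n), (i : ZMod n) + 2) := by
    intro i; unfold window; congr 1; push_cast; ring
  have hshape : ∀ p ∈ E, p.2 = p.1 + 1 ∨ p.2 = p.1 + 2 := by
    intro p hp
    rcases hsub hp with ⟨i, h | h⟩
    · left; rw [h, hfr_eq]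
    · right; rw [h, hwi_eq]
  -- triangle rules
  have tri : ∀ a : ZMod n,
      (((a, a+1) ∈ E ∧ (a+1, a+2) ∈ E) → (a, a+2) ∈ E) ∧
      (((a, a+1) ∈ E ∧ (a, a+2) ∈ E) → (a+1, a+2) ∈ E) ∧
      (((a+1, a+2) ∈ E ∧ (a, a+2) ∈ E) → (a, a+1) ∈ E) := by
    intro a
    set i : ℤ := (a.val : ℤ) with hi
    have hia : ((i : ℤ) : ZMod n) = a := by
      rw [hi]; push_cast; exact ZMod.natCast_rightInverse a
    have p1 : frame n i = (a, a+1) := by rw [hfr_eq, hia]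
    have p2 : frame n (i+1) = (a+1, a+2) := by
      rw [hfr_eq]; push_cast; rw [hia]; congr 1; ring
    have p3 : window n i = (a, a+2) := by rw [hwi_eq, hia]
    have m1 : frame n i ∈ triangleEdges n i := by simp [triangleEdges]
    have m2 : frame n (i+1) ∈ triangleEdges n i := by simp [triangleEdges]
    have m3 : window n i ∈ triangleEdges n i := by simp [triangleEdges]
    refine ⟨?_, ?_, ?_⟩
    · rintro ⟨h1, h2⟩
      rcases hcl i with hss | hfull
      · exfalso
        have heq := hss (Set.mem_inter m1 (by rw [p1]; exact h1))
          (Set.mem_inter m2 (by rw [p2]; exact h2))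
        rw [p1, p2] at heq
        have ha := congrArg Prod.fst heq
        simp only at ha
        have h0 : (1 : ZMod n) = 0 := by linear_combination -ha
        exact one_ne_zero' hn h0
      · have := hfull m3; rwa [p3] at this
    · rintro ⟨h1, h2⟩
      rcases hcl i with hss | hfull
      · exfalso
        have heq := hss (Set.mem_inter m1 (by rw [p1]; exact h1))
          (Set.mem_inter m3 (by rw [p3]; exact h2))
        rw [p1, p3] at heq
        have ha := congrArg Prod.snd heq
        simp only at ha
        have h0 : (1 : ZMod n) = 2 := by linear_combination ha
        exact one_ne_two' hn h0
      · have := hfull m2; rwa [p2] at this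
    · rintro ⟨h1, h2⟩
      rcases hcl i with hss | hfull
      · exfalso
        have heq := hss (Set.mem_inter m2 (by rw [p2]; exact h1))
          (Set.mem_inter m3 (by rw [p3]; exact h2))
        rw [p2, p3] at heq
        have ha := congrArg Prod.fst heq
        simp only at ha
        have h0 : (1 : ZMod n) = 0 := by linear_combination ha
        exact one_ne_zero' hn h0
      · have := hfull m1; rwa [p1] at this
  have hC2 : ∀ a b c : ZMod n, b = a + 1 → c = a + 2 →
      (a, b) ∈ E → (a, c) ∈ E → (b, c) ∈ E := by
    rintro a _ _ rfl rfl h1 h2; exact (tri a).2.1 ⟨h1, h2⟩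
  have hC3 : ∀ a b c : ZMod n, b = a + 1 → c = a + 2 →
      (b, c) ∈ E → (a, c) ∈ E → (a, b) ∈ E := by
    rintro a _ _ rfl rfl h1 h2; exact (tri a).2.2 ⟨h1, h2⟩
  -- there exists a present frame
  obtain ⟨i0, hi0⟩ := hfr
  have hx0 : ((i0 : ZMod n), (i0 : ZMod n) + 1) ∈ E := by rw [← hfr_eq]; exact hi0
  set x0 : ZMod n := (i0 : ZMod n) with hx0def
  -- there exists a missing frame
  have hmiss : ∃ y : ZMod n, (y, y + 1) ∉ E := by
    by_contra hall
    push_neg at hall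
    apply hnt.1
    apply Set.Subset.antisymm hsub
    rintro p ⟨i, h | h⟩
    · rw [h, hfr_eq]; exact hall _
    · rw [h, hwi_eq]
      refine (tri _).1 ⟨hall _, ?_⟩
      have h2 := hall ((i : ZMod n) + 1)
      rwa [show (i : ZMod n) + 1 + 1 = (i : ZMod n) + 2 from by ring] at h2
  obtain ⟨y0, hy0⟩ := hmiss
  -- find the left boundary s of the gap
  have hexP : ∃ m : ℕ, (x0 + (m : ZMod n), x0 + (m : ZMod n) + 1) ∉ E :=
    ⟨(y0 - x0).val, by rw [add_val_sub hn]; exact hy0⟩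
  set mS := Nat.find hexP with hmS
  have hmS_spec := Nat.find_spec hexP
  have hmS_pos : 1 ≤ mS := by
    rcases Nat.eq_zero_or_pos mS with h | h
    · exfalso; rw [← hmS, h] at hmS_spec; simp at hmS_spec; exact hmS_spec hx0
    · exact h
  set s : ZMod n := x0 + (mS : ZMod n) with hsdef
  have hs_not : (s, s + 1) ∉ E := hmS_spec
  have hs_prev : (s - 1, s) ∈ E := by
    have hmin := Nat.find_min hexP (show mS - 1 < mS by omega)
    simp only [not_not] at hmin
    have e1 : x0 + ((mS - 1 : ℕ) : ZMod n) = s - 1 := by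
      rw [Nat.cast_sub hmS_pos, hsdef]; push_cast; ring
    rw [e1] at hmin
    rwa [show s - 1 + 1 = s by ring] at hmin
  -- find the gap length L
  have hfn1 : (s + ((n-1:ℕ):ZMod n), s + ((n-1:ℕ):ZMod n) + 1) ∈ E := by
    have e : s + ((n-1:ℕ):ZMod n) = s - 1 := by rw [cast_nm1 hn]; ring
    rw [e, show s - 1 + 1 = s by ring]; exact hs_prev
  have hexQ : ∃ m : ℕ, 1 ≤ m ∧ (s + (m : ZMod n), s + (m : ZMod n) + 1) ∈ E :=
    ⟨n - 1, by omega, hfn1⟩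
  set L := Nat.find hexQ with hL
  obtain ⟨hL1, hsL⟩ := Nat.find_spec hexQ
  have hLn : L ≤ n - 1 := Nat.find_min' hexQ ⟨by omega, hfn1⟩
  have hgap : ∀ m : ℕ, m < L → (s + (m : ZMod n), s + (m : ZMod n) + 1) ∉ E := by
    intro m hm
    rcases Nat.eq_zero_or_pos m with h | h
    · rw [h]; simpa using hs_not
    · intro hmem
      exact Nat.find_min hexQ hm ⟨h, hmem⟩
  -- structure results
  have hLodd : L % 2 = 1 :=
    oddGap hn E hshape hC2 hC3 hconn s L hL1 hLn hgap hs_prev hsL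
  have hallF : ∀ m : ℕ, L ≤ m → m < n → (s + (m:ZMod n), s + (m:ZMod n) + 1) ∈ E :=
    singleGap hn E hshape hC2 hC3 hconn s L hL1 hLn hLodd hgap hs_prev hsL
  have hallW : ∀ i : ℕ, i + 2 ≤ L → (s + (i:ZMod n), s + (i:ZMod n) + 2) ∈ E :=
    gapWindows hn E hshape hC2 hC3 hconn s L hL1 hLn hLodd hgap hs_prev hsL
  -- forced missing windows
  have hw_left : (s - 1, s + 1) ∉ E := by
    intro h
    have h2 := hC2 (s-1) s (s+1) (by ring) (by ring) hs_prev h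
    exact hgap 0 hL1 (by simpa using h2)
  have hw_right : (s + ((L-1:ℕ):ZMod n), s + ((L-1:ℕ):ZMod n) + 2) ∉ E := by
    intro h
    have hb : s + ((L-1:ℕ):ZMod n) + 1 = s + (L : ZMod n) := by
      rw [Nat.cast_sub hL1]; push_cast; ring
    have h3 := hC3 (s + ((L-1:ℕ):ZMod n)) (s + ((L-1:ℕ):ZMod n) + 1)
      (s + ((L-1:ℕ):ZMod n) + 2) rfl (by ring)
      (by rw [hb]; convert hsL using 2; rw [← hb]; ring) h
    exact hgap (L-1) (by omega) h3
  -- frame and window characterizations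
  have hFchar : ∀ x : ZMod n, ((x, x + 1) ∈ E ↔ L ≤ (x - s).val) := by
    intro x
    constructor
    · intro h
      by_contra h2
      push_neg at h2
      have := hgap _ h2
      rw [add_val_sub hn] at this
      exact this h
    · intro h
      have := hallF _ h (val_sub_lt hn s x)
      rwa [add_val_sub hn] at this
  have hWchar : ∀ x : ZMod n,
      ((x, x + 2) ∈ E ↔ ((x - s).val ≠ L - 1 ∧ (x - s).val ≠ n - 1)) := by
    intro x
    constructor
    · intro h
      constructor
      · intro he
        apply hw_right
        have e : s + ((L-1:ℕ):ZMod n) = x := by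
          rw [← he, add_val_sub hn]
        rw [e]; exact h
      · intro he
        apply hw_left
        have e : s - 1 = x := by
          have := add_val_sub hn s x
          rw [he, cast_nm1 hn] at this
          rw [← this]; ring
        have e2 : s + 1 = x + 2 := by rw [← e]; ring
        rw [e, e2]; exact h
    · rintro ⟨h1, h2⟩
      set m := (x - s).val with hm
      have hmn : m < n := val_sub_lt hn s x
      rcases Nat.lt_or_ge m L with h | h
      · have hm2 : m + 2 ≤ L := by omega
        have := hallW m hm2
        rwa [add_val_sub hn] at this
      · have hfa : (x, x + 1) ∈ E := (hFchar x).2 h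
        have hfb : (x + 1, x + 2) ∈ E := by
          have := hallF (m+1) (by omega) (by omega)
          have e : s + ((m+1:ℕ):ZMod n) = x + 1 := by
            push_cast
            rw [show s + ((m:ZMod n) + 1) = (s + (m:ZMod n)) + 1 from by ring, add_val_sub hn]
          rw [e] at this
          rwa [show x + 1 + 1 = x + 2 from by ring] at this
        exact (tri x).1 ⟨hfa, hfb⟩
  -- choose j and k
  set j : ℕ := (s + 1).val with hjdef
  set k : ℕ := (L - 1) / 2 with hkdef
  have hjz : ((j : ℕ) : ZMod n) = s + 1 := ZMod.natCast_rightInverse (s + 1)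
  have hk2 : 2 * k = L - 1 := by omega
  refine ⟨j, k, by have := ZMod.val_lt (s+1); omega, by omega, ?_⟩
  -- cast computations
  have cj : (((j:ℕ):ℤ) : ZMod n) = s + 1 := by push_cast [hjz]; rfl
  have e1 : (((j:ℤ) - 2 : ℤ) : ZMod n) = s - 1 := by push_cast [hjz]; ring
  have cw1 : window n ((j:ℤ) - 2) = (s - 1, s + 1) := by
    rw [hwi_eq, e1, Prod.mk.injEq]; exact ⟨rfl, by ring⟩
  have e2k : (2:ZMod n) * (k:ZMod n) = ((L - 1 : ℕ) : ZMod n) := by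
    rw [← hk2]; push_cast; ring
  have e2 : (((j:ℤ) + 2 * (k:ℤ) - 1 : ℤ) : ZMod n) = s + ((L-1:ℕ):ZMod n) := by
    push_cast [hjz]
    linear_combination e2k
  have cw2 : window n ((j:ℤ) + 2 * (k:ℤ) - 1)
      = (s + ((L-1:ℕ):ZMod n), s + ((L-1:ℕ):ZMod n) + 2) := by
    rw [hwi_eq, e2]
  -- escape route is disjoint from E
  have hesc : ∀ p ∈ escapeRoute n (k:ℤ) (j:ℤ), p ∉ E := by
    intro p hp
    simp only [escapeRoute, Set.mem_union, Set.mem_insert_iff, Set.mem_singleton_iff,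
      Set.mem_setOf_eq] at hp
    rcases hp with (hp | hp) | ⟨i, hi1, hi2, hp⟩
    · rw [hp, cw1]; exact hw_left
    · rw [hp, cw2]; exact hw_right
    · set t : ℕ := (i - ((j:ℤ) - 1)).toNat with ht
      have htz : (t:ℤ) = i - ((j:ℤ) - 1) := Int.toNat_of_nonneg (by omega)
      have htk : t ≤ 2 * k := by omega
      have hei : ((i:ℤ) : ZMod n) = s + (t : ZMod n) := by
        have hi' : (i:ℤ) = ((j:ℤ) - 1) + (t:ℤ) := by omega
        rw [hi']; push_cast [hjz]; ring
      rw [hp, hfr_eq, hei]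
      exact hgap t (by omega)
  -- final set equality
  ext p
  rw [stripTailEdges, Set.mem_diff]
  constructor
  · intro hp
    exact ⟨hsub hp, fun hp2 => hesc p hp2 hp⟩
  · rintro ⟨⟨i, hi | hi⟩, hne⟩
    · -- p is a frame
      rw [hfr_eq] at hi
      subst hi
      set x : ZMod n := (i : ZMod n) with hx
      set m : ℕ := (x - s).val with hm
      by_cases hc : L ≤ m
      · exact (hFchar x).2 hc
      · exfalso
        apply hne
        push_neg at hc
        have hxe : s + (m : ZMod n) = x := add_val_sub hn s x
        have hcast : (((j:ℤ) - 1 + (m:ℤ) : ℤ) : ZMod n) = x := by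
          push_cast [hjz]
          rw [← hxe]; ring
        refine Set.mem_union_right _ ⟨(j:ℤ) - 1 + (m:ℤ), by omega, by omega, ?_⟩
        rw [hfr_eq, hcast]
    · -- p is a window
      rw [hwi_eq] at hi
      subst hi
      set x : ZMod n := (i : ZMod n) with hx
      set m : ℕ := (x - s).val with hm
      have hxe : s + (m : ZMod n) = x := add_val_sub hn s x
      by_cases h1 : m = n - 1
      · exfalso
        apply hne
        apply Set.mem_union_left
        apply Set.mem_insert_iff.mpr
        left
        have hxs : x = s - 1 := by
          rw [← hxe, h1, cast_nm1 hn]; ring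
        rw [cw1, hxs, Prod.mk.injEq]
        exact ⟨rfl, by ring⟩
      · by_cases h2 : m = L - 1
        · exfalso
          apply hne
          apply Set.mem_union_left
          apply Set.mem_insert_iff.mpr
          right
          have hxs : x = s + ((L-1:ℕ) : ZMod n) := by rw [← hxe, h2]
          rw [cw2, hxs]
          rfl
        · exact (hWchar x).2 ⟨h2, h1⟩
end

section
/- Let n ≥ 5, 0 ≤ k ≤ ⌈(n−2)/2⌉, and j ∈ Z. The number of directed spanning trees rooted at v_j of the directed strip graph with tails S_{n,k,j} equals the number of directed spanning trees rooted at vertex 1 of the directed strip graph S_{n−2k}. -/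
open Relation Finset

private lemma transGen_lt {V : Type*} {r : V → V → Prop} {ρ : V → ℕ}
    (h : ∀ a b, r a b → ρ a < ρ b) {a b} (ht : Relation.TransGen r a b) : ρ a < ρ b := by
  induction ht with
  | single h' => exact h _ _ h'
  | tail _ h' ih => exact ih.trans (h _ _ h')

theorem countTrees {V : Type*} [Fintype V] [DecidableEq V] (Amb : Set (V × V)) (u : V)
    (ρ : V → ℕ) (hmono : ∀ p ∈ Amb, ρ p.1 < ρ p.2) :
    Set.ncard {E | IsDirSpanningTree Amb u E} =
      ∏ v : V, (if v = u then 1 else Set.ncard {w | (w, v) ∈ Amb}) := by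
  classical
  set Q : V → V → Prop := fun v w => (v = u → w = u) ∧ (v ≠ u → (w, v) ∈ Amb) with hQ
  set Φ : {f : V → V // ∀ v, Q v (f v)} → Set (V × V) :=
    fun f => {p | p.2 ≠ u ∧ p.1 = f.1 p.2} with hΦ
  have hsub : ∀ f, Φ f ⊆ Amb := by
    rintro f ⟨a, b⟩ ⟨h1, h2⟩
    have := (f.2 b).2 h1
    rwa [← h2] at this
  have hreach : ∀ f, ∀ v : V, Relation.ReflTransGen (dstep (Φ f)) u v := by
    intro f
    suffices H : ∀ N, ∀ v : V, ρ v < N → Relation.ReflTransGen (dstep (Φ f)) u v by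
      intro v; exact H (ρ v + 1) v (Nat.lt_succ_self _)
    intro N
    induction N with
    | zero => intro v hv; omega
    | succ N ih =>
      intro v hv
      by_cases hvu : v = u
      · subst hvu; exact Relation.ReflTransGen.refl
      · have hfv : (f.1 v, v) ∈ Amb := (f.2 v).2 hvu
        have hlt : ρ (f.1 v) < ρ v := hmono _ hfv
        exact (ih (f.1 v) (by omega)).tail (⟨hvu, rfl⟩ : dstep (Φ f) (f.1 v) v)
  have htree : ∀ f, IsDirSpanningTree Amb u (Φ f) := by
    intro f
    refine ⟨hsub f, ?_, ?_, ?_, fun v _ => hreach f v⟩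
    · intro a b
      have ha : Relation.ReflTransGen (fun x y => (x, y) ∈ Φ f ∨ (y, x) ∈ Φ f) u a :=
        Relation.ReflTransGen.mono (fun x y h => Or.inl h) _ _ (hreach f a)
      have hb : Relation.ReflTransGen (fun x y => (x, y) ∈ Φ f ∨ (y, x) ∈ Φ f) u b :=
        Relation.ReflTransGen.mono (fun x y h => Or.inl h) _ _ (hreach f b)
      exact ((@Relation.ReflTransGen.stdSymm _ _ ⟨fun x y h => h.symm⟩).symm _ _ ha).trans hb
    · intro v hcyc
      exact absurd (transGen_lt (fun a b h => hmono (a, b) (hsub f h)) hcyc) (lt_irrefl _)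
    · intro v hvu
      exact ⟨f.1 v, ⟨hvu, rfl⟩, fun w hw => hw.2⟩
  have hinj : Function.Injective Φ := by
    intro f g h
    apply Subtype.ext; funext v
    by_cases hv : v = u
    · rw [(f.2 v).1 hv, (g.2 v).1 hv]
    · have hm : (f.1 v, v) ∈ Φ g := h ▸ (⟨hv, rfl⟩ : (f.1 v, v) ∈ Φ f)
      exact hm.2
  have hsurj : ∀ E, IsDirSpanningTree Amb u E → ∃ f, Φ f = E := by
    intro E hE
    obtain ⟨hEs, hconn, hacyc, huniq, hreachE⟩ := hE
    have hnotu : ∀ a, (a, u) ∉ E := by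
      intro a ha
      by_cases hau : a = u
      · exact hacyc u (Relation.TransGen.single (show dstep E u u from hau ▸ ha))
      · exact hacyc u (Relation.TransGen.tail' (hreachE a hau) (show dstep E a u from ha))
    refine ⟨⟨fun v => if h : v = u then u else ((huniq v h).exists).choose, ?_⟩, ?_⟩
    · intro v
      constructor
      · intro hv; simp [hv]
      · intro hv; simp only [dif_neg hv]; exact hEs ((huniq v hv).exists.choose_spec)
    · ext ⟨a, b⟩
      simp only [hΦ, Set.mem_setOf_eq]
      constructor
      · rintro ⟨hb, ha⟩
        simp only [dif_neg hb] at ha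
        rw [ha]
        exact (huniq b hb).exists.choose_spec
      · intro hab
        have hb : b ≠ u := fun h => hnotu a (h ▸ hab)
        refine ⟨hb, ?_⟩
        simp only [dif_neg hb]
        obtain ⟨w, _, huw⟩ := huniq b hb
        rw [huw a hab, huw _ ((huniq b hb).exists.choose_spec)]
  have key : {E | IsDirSpanningTree Amb u E} = Set.range Φ := by
    ext E
    exact ⟨fun h => (hsurj E h).imp (fun f hf => hf), by rintro ⟨f, rfl⟩; exact htree f⟩
  rw [key, ← Nat.card_coe_set_eq, Nat.card_range_of_injective hinj]
  rw [Nat.card_congr (Equiv.subtypePiEquivPi (p := Q)), Nat.card_pi]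
  refine Finset.prod_congr rfl (fun v _ => ?_)
  by_cases hv : v = u
  · simp only [if_pos hv]
    have : ∀ w : V, Q v w ↔ w = u := by
      intro w; subst hv
      constructor
      · intro h; exact h.1 rfl
      · intro h; exact ⟨fun _ => h, fun h' => absurd rfl h'⟩
    rw [Nat.card_congr (Equiv.subtypeEquivRight this)]
    simp [Nat.card_eq_fintype_card]
  · simp only [if_neg hv]
    have : ∀ w : V, Q v w ↔ (w, v) ∈ Amb := by
      intro w
      constructor
      · intro h; exact h.2 hv
      · intro h; exact ⟨fun h' => absurd h' hv, fun _ => h⟩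
    rw [Nat.card_congr (Equiv.subtypeEquivRight this)]
    exact Nat.card_coe_set_eq _

lemma prod_if_le (N c : ℕ) :
    (∏ i ∈ Finset.range N, (if i ≤ c then 1 else 2)) = 2 ^ (N - (c + 1)) := by
  induction N with
  | zero => simp
  | succ N ih =>
    rw [Finset.prod_range_succ, ih]
    by_cases h : N ≤ c
    · rw [if_pos h]
      have h1 : N - (c + 1) = 0 := by omega
      have h2 : N + 1 - (c + 1) = 0 := by omega
      rw [h1, h2, mul_one]
    · rw [if_neg h]
      have h2 : N + 1 - (c + 1) = (N - (c + 1)) + 1 := by omega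
      rw [h2, pow_succ]

lemma tStrip_eq (m : ℕ) (hm : 1 ≤ m) : tStrip m = 2 ^ (m - 2) := by
  have h0 : (0 : ℕ) < m := hm
  have hset : {E : Set (Fin m × Fin m) | IsStripTree m E} =
      {E | IsDirSpanningTree (stripEdges m) ⟨0, h0⟩ E} := by
    ext E
    simp only [Set.mem_setOf_eq, IsStripTree, IsDirSpanningTree]
    constructor
    · rintro ⟨h1, h2, h3, h4, h5⟩
      refine ⟨h1, h2, h3, fun v hv => h4 v ?_, fun v hv => ?_⟩
      · intro h; exact hv (Fin.ext h)
      · obtain ⟨u, hu0, hu⟩ := h5 v (fun h => hv (Fin.ext h))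
        have : u = ⟨0, h0⟩ := Fin.ext hu0
        exact this ▸ hu
    · rintro ⟨h1, h2, h3, h4, h5⟩
      refine ⟨h1, h2, h3, fun v hv => h4 v (fun h => hv (by rw [h])), fun v hv => ?_⟩
      exact ⟨⟨0, h0⟩, rfl, h5 v (fun h => hv (by rw [h]))⟩
  rw [tStrip, hset, countTrees (stripEdges m) ⟨0, h0⟩ Fin.val
      (by rintro ⟨a, b⟩ h; rcases h with h | h <;> simp at h ⊢ <;> omega)]
  have hfac : ∀ v : Fin m,
      (if v = ⟨0, h0⟩ then 1 else Set.ncard {w | (w, v) ∈ stripEdges m}) =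
      (if v.val ≤ 1 then 1 else 2 : ℕ) := by
    intro v
    by_cases hv0 : v = ⟨0, h0⟩
    · rw [if_pos hv0, hv0, if_pos (by norm_num)]
    · rw [if_neg hv0]
      have hv0' : v.val ≠ 0 := fun h => hv0 (Fin.ext h)
      by_cases hv1 : v.val = 1
      · rw [if_pos (by omega)]
        have : {w : Fin m | (w, v) ∈ stripEdges m} = {⟨0, h0⟩} := by
          ext w
          simp only [Set.mem_setOf_eq, stripEdges, Set.mem_singleton_iff, Fin.ext_iff]
          constructor
          · intro h; rcases h with h | h <;> omega
          · intro h; left; omega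
        rw [this, Set.ncard_singleton]
      · rw [if_neg (by omega)]
        have h2 : 2 ≤ v.val := by omega
        have hlt1 : v.val - 1 < m := by omega
        have hlt2 : v.val - 2 < m := by omega
        have : {w : Fin m | (w, v) ∈ stripEdges m} = {⟨v.val - 1, hlt1⟩, ⟨v.val - 2, hlt2⟩} := by
          ext w
          simp only [Set.mem_setOf_eq, stripEdges, Set.mem_insert_iff,
            Set.mem_singleton_iff, Fin.ext_iff]
          constructor
          · intro h; rcases h with h | h
            · left; omega
            · right; omega
          · intro h; rcases h with h | h
            · left; omega
            · right; omega
        rw [this, Set.ncard_pair (by simp only [ne_eq, Fin.ext_iff]; omega)]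
  rw [Finset.prod_congr rfl (fun v _ => hfac v)]
  rw [show (fun v : Fin m => (if v.val ≤ 1 then 1 else 2 : ℕ)) =
      (fun v : Fin m => (fun i : ℕ => (if i ≤ 1 then 1 else 2 : ℕ)) v.val) from rfl]
  rw [Fin.prod_univ_eq_prod_range (fun i : ℕ => (if i ≤ 1 then 1 else 2 : ℕ)) m, prod_if_le]

section ZModChar

variable {n : ℕ} (hn : 5 ≤ n)

lemma natCast_inj_lt {a b : ℕ} (ha : a < n) (hb : b < n) : ((a : ZMod n) = b) ↔ a = b := by
  rw [ZMod.natCast_eq_natCast_iff]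
  exact ⟨fun h => h.eq_of_lt_of_lt ha hb, fun h => h ▸ Nat.ModEq.refl _⟩

include hn

lemma one_ne_two' : (1 : ZMod n) ≠ 2 := by
  have h1 : ((1 : ℕ) : ZMod n) ≠ ((2 : ℕ) : ZMod n) := by
    rw [Ne, natCast_inj_lt (by omega) (by omega)]; omega
  simpa using h1

lemma frame_eq_iff (i : ℤ) (w v : ZMod n) :
    (w, v) = frame n i ↔ w = (i : ZMod n) ∧ v = w + 1 := by
  have hf : frame n i = ((i : ZMod n), (i : ZMod n) + 1) := by
    unfold frame; push_cast; rfl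
  rw [hf, Prod.mk.injEq]
  constructor
  · rintro ⟨h1, h2⟩; exact ⟨h1, by rw [h2, h1]⟩
  · rintro ⟨h1, h2⟩; exact ⟨h1, by rw [h2, h1]⟩

lemma window_eq_iff (i : ℤ) (w v : ZMod n) :
    (w, v) = window n i ↔ w = (i : ZMod n) ∧ v = w + 2 := by
  have hf : window n i = ((i : ZMod n), (i : ZMod n) + 2) := by
    unfold window; push_cast; rfl
  rw [hf, Prod.mk.injEq]
  constructor
  · rintro ⟨h1, h2⟩; exact ⟨h1, by rw [h2, h1]⟩
  · rintro ⟨h1, h2⟩; exact ⟨h1, by rw [h2, h1]⟩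

lemma mem_sqCycle_iff (w v : ZMod n) :
    (w, v) ∈ sqCycleEdges n ↔ v = w + 1 ∨ v = w + 2 := by
  haveI : NeZero n := ⟨by omega⟩
  constructor
  · rintro ⟨i, h | h⟩
    · exact Or.inl ((frame_eq_iff hn i w v).mp h).2
    · exact Or.inr ((window_eq_iff hn i w v).mp h).2
  · intro h
    refine ⟨(w.val : ℤ), ?_⟩
    have hw : ((w.val : ℤ) : ZMod n) = w := by
      push_cast
      exact ZMod.natCast_rightInverse w
    rcases h with h | h
    · exact Or.inl ((frame_eq_iff hn _ w v).mpr ⟨hw.symm, h⟩)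
    · exact Or.inr ((window_eq_iff hn _ w v).mpr ⟨hw.symm, h⟩)

end ZModChar

section Escape
variable {n : ℕ} (hn : 5 ≤ n)
include hn

lemma cast_sub_eq {a : ℕ} (ha : a ≤ n) : ((n - a : ℕ) : ZMod n) = -(a : ZMod n) := by
  haveI : NeZero n := ⟨by omega⟩
  push_cast [Nat.cast_sub ha]
  rw [ZMod.natCast_self]; ring

lemma val_shift (j : ℤ) (w : ZMod n) : ((w - (j : ZMod n)).val : ZMod n) = w - (j : ZMod n) := by
  haveI : NeZero n := ⟨by omega⟩
  exact ZMod.natCast_rightInverse _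

lemma exists_interval_iff (k : ℕ) (j : ℤ) (hk : 2 * k + 1 ≤ n) (w : ZMod n) :
    (∃ i : ℤ, j - 1 ≤ i ∧ i ≤ j + 2 * (k : ℤ) - 1 ∧ w = (i : ZMod n)) ↔
      ((w - (j : ZMod n)).val < 2 * k ∨ (w - (j : ZMod n)).val = n - 1) := by
  haveI : NeZero n := ⟨by omega⟩
  set S := (w - (j : ZMod n)).val with hS
  have hSlt : S < n := ZMod.val_lt _
  constructor
  · rintro ⟨i, hi1, hi2, hi3⟩
    have hd : w - (j : ZMod n) = ((i - j : ℤ) : ZMod n) := by push_cast [hi3]; ring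
    by_cases hneg : i - j = -1
    · right
      have : w - (j : ZMod n) = ((n - 1 : ℕ) : ZMod n) := by
        rw [hd, hneg, cast_sub_eq hn (by omega)]; push_cast; ring
      have := congrArg ZMod.val this
      rwa [← hS, ZMod.val_cast_of_lt (by omega)] at this
    · left
      have h0 : 0 ≤ i - j := by omega
      have hlt : (i - j).toNat < 2 * k := by omega
      have heq : w - (j : ZMod n) = (((i - j).toNat : ℕ) : ZMod n) := by
        rw [hd, show i - j = ((i - j).toNat : ℤ) by omega]; push_cast; rfl
      have hv : S = (i - j).toNat := by
        rw [hS, heq, ZMod.val_cast_of_lt (a := (i - j).toNat) (by omega)]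
      omega
  · rintro (h | h)
    · refine ⟨j + S, by omega, by omega, ?_⟩
      have : ((j + (S : ℤ) : ℤ) : ZMod n) = (j : ZMod n) + ((S : ℕ) : ZMod n) := by push_cast; ring
      rw [this, hS, val_shift hn]; ring
    · refine ⟨j - 1, by omega, by omega, ?_⟩
      have h1 : w - (j : ZMod n) = -1 := by
        rw [← val_shift hn j w, ← hS, h, cast_sub_eq hn (by omega)]; push_cast; ring
      have : ((j - 1 : ℤ) : ZMod n) = (j : ZMod n) - 1 := by push_cast; ring
      rw [this]; linear_combination h1

lemma escape_frame_iff (k : ℕ) (j : ℤ) (hk : 2 * k + 1 ≤ n) (w : ZMod n) :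
    ((w, w + 1) ∈ escapeRoute n (k : ℤ) j ↔
      ((w - (j : ZMod n)).val < 2 * k ∨ (w - (j : ZMod n)).val = n - 1)) := by
  have hne : ¬ ((w + 1 : ZMod n) = w + 2) := by
    intro h; exact one_ne_two' hn (add_left_cancel h)
  constructor
  · intro h
    rcases h with (h | h) | h
    · exact absurd ((window_eq_iff hn _ w _).mp h).2 hne
    · exact absurd ((window_eq_iff hn _ w _).mp h).2 hne
    · obtain ⟨i, hi1, hi2, hi3⟩ := h
      exact (exists_interval_iff hn k j hk w).mp
        ⟨i, hi1, hi2, ((frame_eq_iff hn i w _).mp hi3).1⟩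
  · intro h
    obtain ⟨i, hi1, hi2, hi3⟩ := (exists_interval_iff hn k j hk w).mpr h
    exact Or.inr ⟨i, hi1, hi2, (frame_eq_iff hn i w _).mpr ⟨hi3, rfl⟩⟩

variable (j : ℤ)

lemma sub_eq_cast_iff (w : ZMod n) (c : ℕ) (hc : c < n) :
    w - (j : ZMod n) = (c : ZMod n) ↔ (w - (j : ZMod n)).val = c := by
  constructor
  · intro h; rw [h, ZMod.val_cast_of_lt hc]
  · intro h; rw [← val_shift hn j w, h]

lemma escape_window_iff (k : ℕ) (hk : 2 * k + 1 ≤ n) (w : ZMod n) :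
    ((w, w + 2) ∈ escapeRoute n (k : ℤ) j ↔
      ((w - (j : ZMod n)).val = n - 2 ∨
        (w - (j : ZMod n)).val = (if k = 0 then n - 1 else 2 * k - 1))) := by
  haveI : NeZero n := ⟨by omega⟩
  have hne : ∀ i : ℤ, ¬ ((w, w + 2) = frame n i) := by
    intro i h
    exact one_ne_two' hn (add_left_cancel ((frame_eq_iff hn i w _).mp h).2.symm)
  have e1 : ((j - 2 : ℤ) : ZMod n) = (j : ZMod n) + ((n - 2 : ℕ) : ZMod n) := by
    rw [cast_sub_eq hn (by omega)]; push_cast; ring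
  have h1 : ((w, w + 2) = window n (j - 2)) ↔ (w - (j : ZMod n)).val = n - 2 := by
    rw [window_eq_iff hn, and_iff_left rfl, e1, ← sub_eq_iff_eq_add',
      sub_eq_cast_iff hn j w (n - 2) (by omega)]
  have e2 : ((j + 2 * (k : ℤ) - 1 : ℤ) : ZMod n) =
      (j : ZMod n) + (((if k = 0 then n - 1 else 2 * k - 1) : ℕ) : ZMod n) := by
    by_cases hk0 : k = 0
    · subst hk0; rw [if_pos rfl, cast_sub_eq hn (by omega)]; push_cast; ring
    · rw [if_neg hk0]; push_cast [Nat.cast_sub (by omega : 1 ≤ 2 * k)]; ring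
  have h2 : ((w, w + 2) = window n (j + 2 * (k : ℤ) - 1)) ↔
      (w - (j : ZMod n)).val = (if k = 0 then n - 1 else 2 * k - 1) := by
    rw [window_eq_iff hn, and_iff_left rfl, e2, ← sub_eq_iff_eq_add',
      sub_eq_cast_iff hn j w _ (by split_ifs <;> omega)]
  constructor
  · intro h
    rcases h with (h | h) | h
    · exact Or.inl (h1.mp h)
    · exact Or.inr (h2.mp h)
    · obtain ⟨i, _, _, hi3⟩ := h; exact absurd hi3 (hne i)
  · intro h
    rcases h with h | h
    · exact Or.inl (Or.inl (h1.mpr h))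
    · exact Or.inl (Or.inr (h2.mpr h))

lemma mem_stripTail_iff (k : ℕ) (hk : 2 * k + 1 ≤ n) (w v : ZMod n) :
    ((w, v) ∈ stripTailEdges n (k : ℤ) j) ↔
      ((v = w + 1 ∧ 2 * k ≤ (w - (j : ZMod n)).val ∧ (w - (j : ZMod n)).val + 2 ≤ n) ∨
       (v = w + 2 ∧ (w - (j : ZMod n)).val + 2 ≠ n ∧
         (w - (j : ZMod n)).val ≠ (if k = 0 then n - 1 else 2 * k - 1))) := by
  haveI : NeZero n := ⟨by omega⟩
  have hSlt : (w - (j : ZMod n)).val < n := ZMod.val_lt _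
  rw [stripTailEdges, Set.mem_diff, mem_sqCycle_iff hn]
  constructor
  · rintro ⟨h1 | h1, h2⟩
    · subst h1
      have h3 : ¬ ((w - (j : ZMod n)).val < 2 * k ∨ (w - (j : ZMod n)).val = n - 1) :=
        fun hc => h2 ((escape_frame_iff hn k j hk w).mpr hc)
      exact Or.inl ⟨rfl, by omega, by omega⟩
    · subst h1
      have h3 : ¬ ((w - (j : ZMod n)).val = n - 2 ∨
          (w - (j : ZMod n)).val = (if k = 0 then n - 1 else 2 * k - 1)) :=
        fun hc => h2 ((escape_window_iff hn j k hk w).mpr hc)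
      exact Or.inr ⟨rfl, by omega, fun hc => h3 (Or.inr hc)⟩
  · rintro (⟨h1, h2, h3⟩ | ⟨h1, h2, h3⟩)
    · subst h1
      refine ⟨Or.inl rfl, fun hc => ?_⟩
      have := (escape_frame_iff hn k j hk w).mp hc; omega
    · subst h1
      refine ⟨Or.inr rfl, fun hc => ?_⟩
      rcases (escape_window_iff hn j k hk w).mp hc with h | h
      · omega
      · exact h3 h

lemma val_sub_one (v : ZMod n) (h : 1 ≤ (v - (j : ZMod n)).val) :
    (v - 1 - (j : ZMod n)).val = (v - (j : ZMod n)).val - 1 := by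
  haveI : NeZero n := ⟨by omega⟩
  have hSlt : (v - (j : ZMod n)).val < n := ZMod.val_lt _
  have h1 : v - 1 - (j : ZMod n) = (((v - (j : ZMod n)).val - 1 : ℕ) : ZMod n) := by
    have h2 := val_shift hn j v
    push_cast [Nat.cast_sub h]
    linear_combination -h2
  rw [h1, ZMod.val_cast_of_lt (by omega)]

lemma val_sub_two (v : ZMod n) (h : 2 ≤ (v - (j : ZMod n)).val) :
    (v - 2 - (j : ZMod n)).val = (v - (j : ZMod n)).val - 2 := by
  haveI : NeZero n := ⟨by omega⟩
  have hSlt : (v - (j : ZMod n)).val < n := ZMod.val_lt _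
  have h1 : v - 2 - (j : ZMod n) = (((v - (j : ZMod n)).val - 2 : ℕ) : ZMod n) := by
    have h2 := val_shift hn j v
    push_cast [Nat.cast_sub h]
    linear_combination -h2
  rw [h1, ZMod.val_cast_of_lt (by omega)]

lemma val_sub_two_wrap (v : ZMod n) (h : (v - (j : ZMod n)).val = 1) :
    (v - 2 - (j : ZMod n)).val = n - 1 := by
  haveI : NeZero n := ⟨by omega⟩
  have h1 : v - 2 - (j : ZMod n) = (((n - 1 : ℕ)) : ZMod n) := by
    have h2 := val_shift hn j v
    rw [h] at h2
    rw [cast_sub_eq hn (by omega)]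
    push_cast at h2 ⊢
    linear_combination -h2
  rw [h1, ZMod.val_cast_of_lt (by omega)]

lemma val_add_one (w : ZMod n) (h : (w - (j : ZMod n)).val + 1 < n) :
    (w + 1 - (j : ZMod n)).val = (w - (j : ZMod n)).val + 1 := by
  haveI : NeZero n := ⟨by omega⟩
  have h1 : w + 1 - (j : ZMod n) = (((w - (j : ZMod n)).val + 1 : ℕ) : ZMod n) := by
    have h2 := val_shift hn j w
    push_cast
    linear_combination -h2
  rw [h1, ZMod.val_cast_of_lt h]

lemma val_add_two (w : ZMod n) (h : (w - (j : ZMod n)).val + 2 < n) :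
    (w + 2 - (j : ZMod n)).val = (w - (j : ZMod n)).val + 2 := by
  haveI : NeZero n := ⟨by omega⟩
  have h1 : w + 2 - (j : ZMod n) = (((w - (j : ZMod n)).val + 2 : ℕ) : ZMod n) := by
    have h2 := val_shift hn j w
    push_cast
    linear_combination -h2
  rw [h1, ZMod.val_cast_of_lt h]

lemma val_add_two_wrap (w : ZMod n) (h : (w - (j : ZMod n)).val = n - 1) :
    (w + 2 - (j : ZMod n)).val = 1 := by
  haveI : NeZero n := ⟨by omega⟩
  have h3 : w - (j : ZMod n) = -1 := by
    rw [← val_shift hn j w, h, cast_sub_eq hn (by omega)]; push_cast; ring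
  have h1 : w + 2 - (j : ZMod n) = (((1 : ℕ)) : ZMod n) := by
    push_cast
    linear_combination h3
  rw [h1, ZMod.val_cast_of_lt (by omega)]


def rho (n k : ℕ) (j : ℤ) (v : ZMod n) : ℕ :=
  if (v - (j : ZMod n)).val % 2 = 0 ∧ (v - (j : ZMod n)).val ≤ 2 * k then
    (v - (j : ZMod n)).val / 2
  else if 2 * k < (v - (j : ZMod n)).val then (v - (j : ZMod n)).val - k
  else n - 1 - k + ((v - (j : ZMod n)).val + 1) / 2

lemma rho_mono (k : ℕ) (hk : 2 * k + 1 ≤ n) :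
    ∀ p ∈ stripTailEdges n (k : ℤ) j, rho n k j p.1 < rho n k j p.2 := by
  haveI : NeZero n := ⟨by omega⟩
  rintro ⟨w, v⟩ hp
  dsimp only
  have hSlt : (w - (j : ZMod n)).val < n := ZMod.val_lt _
  rcases (mem_stripTail_iff hn j k hk w v).mp hp with ⟨h1, h2, h3⟩ | ⟨h1, h2, h3⟩
  · subst h1
    have hv := val_add_one hn j w (by omega)
    unfold rho; rw [hv]; split_ifs <;> first | omega | tauto
  · subst h1
    by_cases hw : (w - (j : ZMod n)).val = n - 1
    · have hv := val_add_two_wrap hn j w hw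
      have hk0 : k ≠ 0 := by
        intro h0; rw [if_pos h0] at h3; exact h3 hw
      rw [if_neg hk0] at h3
      unfold rho; rw [hv]; split_ifs <;> first | omega | tauto
    · have hv := val_add_two hn j w (by omega)
      unfold rho; rw [hv]
      by_cases hk0 : k = 0
      · rw [if_pos hk0] at h3
        subst hk0; split_ifs <;> first | omega | tauto
      · rw [if_neg hk0] at h3
        split_ifs <;> first | omega | tauto

lemma inSet_card (k : ℕ) (hk : 2 * k + 1 ≤ n) (v : ZMod n) (hv : v ≠ (j : ZMod n)) :
    Set.ncard {w : ZMod n | (w, v) ∈ stripTailEdges n (k : ℤ) j} =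
      (if (v - (j : ZMod n)).val ≤ 2 * k + 1 then 1 else 2) := by
  haveI : NeZero n := ⟨by omega⟩
  set s := (v - (j : ZMod n)).val with hs
  have hslt : s < n := ZMod.val_lt _
  have hs0 : s ≠ 0 := by
    intro h0
    apply hv
    have h1 : v - (j : ZMod n) = 0 := by
      rw [← val_shift hn j v, ← hs, h0]; simp
    linear_combination h1
  have e2 : ¬ (v = v - 1 + 2) := fun h => one_ne_two' hn (by linear_combination h)
  have e3 : ¬ (v = v - 2 + 1) := fun h => one_ne_two' hn (by linear_combination -h)
  have hne12 : (v - 1 : ZMod n) ≠ v - 2 := fun h => one_ne_two' hn (by linear_combination -h)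
  have hS1 : (v - 1 - (j : ZMod n)).val = s - 1 := val_sub_one hn j v (by omega)
  have hS2 : (v - 2 - (j : ZMod n)).val = (if s = 1 then n - 1 else s - 2) := by
    by_cases h1 : s = 1
    · rw [if_pos h1]; exact val_sub_two_wrap hn j v h1
    · rw [if_neg h1]; exact val_sub_two hn j v (by omega)
  have m1 : ((v - 1, v) ∈ stripTailEdges n (k : ℤ) j) ↔ 2 * k + 1 ≤ s := by
    rw [mem_stripTail_iff hn j k hk (v - 1) v, hS1]
    constructor
    · rintro (⟨_, h, h'⟩ | ⟨hc, _, _⟩)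
      · omega
      · exact absurd hc e2
    · intro h
      exact Or.inl ⟨by ring, by omega, by omega⟩
  have m2 : ((v - 2, v) ∈ stripTailEdges n (k : ℤ) j) ↔ s ≠ 2 * k + 1 := by
    rw [mem_stripTail_iff hn j k hk (v - 2) v, hS2]
    constructor
    · rintro (⟨hc, _, _⟩ | ⟨_, h, h'⟩)
      · exact absurd hc e3
      · split_ifs at h h' <;> omega
    · intro h
      refine Or.inr ⟨by ring, ?_, ?_⟩ <;> split_ifs <;> omega
  have key : ∀ w, (w, v) ∈ stripTailEdges n (k : ℤ) j → w = v - 1 ∨ w = v - 2 := by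
    intro w hw
    rcases (mem_stripTail_iff hn j k hk w v).mp hw with ⟨h1, _, _⟩ | ⟨h1, _, _⟩
    · exact Or.inl (by linear_combination -h1)
    · exact Or.inr (by linear_combination -h1)
  by_cases hc : s ≤ 2 * k + 1
  · rw [if_pos hc]
    by_cases hc2 : s = 2 * k + 1
    · have hset : {w : ZMod n | (w, v) ∈ stripTailEdges n (k : ℤ) j} = {v - 1} := by
        ext w
        simp only [Set.mem_setOf_eq, Set.mem_singleton_iff]
        constructor
        · intro h
          rcases key w h with h' | h'
          · exact h'
          · subst h'; exact absurd hc2 (m2.mp h)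
        · intro h; subst h; exact m1.mpr (by omega)
      rw [hset, Set.ncard_singleton]
    · have hset : {w : ZMod n | (w, v) ∈ stripTailEdges n (k : ℤ) j} = {v - 2} := by
        ext w
        simp only [Set.mem_setOf_eq, Set.mem_singleton_iff]
        constructor
        · intro h
          rcases key w h with h' | h'
          · subst h'; have := m1.mp h; omega
          · exact h'
        · intro h; subst h; exact m2.mpr (by omega)
      rw [hset, Set.ncard_singleton]
  · rw [if_neg hc]
    have hset : {w : ZMod n | (w, v) ∈ stripTailEdges n (k : ℤ) j} = {v - 1, v - 2} := by
      ext w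
      simp only [Set.mem_setOf_eq, Set.mem_insert_iff, Set.mem_singleton_iff]
      constructor
      · exact key w
      · rintro (h | h)
        · subst h; exact m1.mpr (by omega)
        · subst h; exact m2.mpr (by omega)
    rw [hset, Set.ncard_pair hne12]

end Escape

theorem stripTail_tree_count (n : ℕ) (hn : 5 ≤ n) (k : ℕ) (hk : k ≤ (n - 1) / 2) (j : ℤ) :
    Set.ncard {E : Set (ZMod n × ZMod n) |
        IsDirSpanningTree (stripTailEdges n (k : ℤ) j) ((j : ZMod n)) E} =
      tStrip (n - 2 * k) := by
  haveI : NeZero n := ⟨by omega⟩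
  have hk' : 2 * k + 1 ≤ n := by omega
  rw [countTrees (stripTailEdges n (k : ℤ) j) ((j : ZMod n)) (rho n k j) (rho_mono hn j k hk')]
  rw [tStrip_eq (n - 2 * k) (by omega)]
  have hfac : ∀ v : ZMod n,
      (if v = (j : ZMod n) then 1
        else Set.ncard {w | (w, v) ∈ stripTailEdges n (k : ℤ) j}) =
      (if (v - (j : ZMod n)).val ≤ 2 * k + 1 then 1 else 2) := by
    intro v
    by_cases hv : v = (j : ZMod n)
    · rw [if_pos hv, hv]
      simp [sub_self, ZMod.val_zero]
    · rw [if_neg hv, inSet_card hn j k hk' v hv]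
  rw [Finset.prod_congr rfl fun v _ => hfac v]
  have hbij : Function.Bijective (fun i : Fin n => ((i : ℕ) : ZMod n) + (j : ZMod n)) := by
    constructor
    · intro a b hab
      have h1 : ((a : ℕ) : ZMod n) = ((b : ℕ) : ZMod n) := by
        have := add_right_cancel hab
        exact this
      have h2 : (a : ℕ) = (b : ℕ) := by
        rw [← ZMod.val_cast_of_lt a.isLt, ← ZMod.val_cast_of_lt b.isLt, h1]
      exact Fin.ext h2
    · intro v
      refine ⟨⟨(v - (j : ZMod n)).val, ZMod.val_lt _⟩, ?_⟩
      have h1 := val_shift hn j v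
      simp only
      rw [h1]
      ring
  have hcomp : ∀ i : Fin n,
      (if (i : ℕ) ≤ 2 * k + 1 then 1 else 2) =
      (fun v : ZMod n => if (v - (j : ZMod n)).val ≤ 2 * k + 1 then 1 else 2)
        (((i : ℕ) : ZMod n) + (j : ZMod n)) := by
    intro i
    simp only
    rw [add_sub_cancel_right, ZMod.val_cast_of_lt i.isLt]
  rw [← Fintype.prod_bijective (fun i : Fin n => ((i : ℕ) : ZMod n) + (j : ZMod n)) hbij
      (fun i : Fin n => if (i : ℕ) ≤ 2 * k + 1 then 1 else 2)
      (fun v : ZMod n => if (v - (j : ZMod n)).val ≤ 2 * k + 1 then 1 else 2) hcomp]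
  rw [Fin.prod_univ_eq_prod_range (fun t : ℕ => if t ≤ 2 * k + 1 then 1 else 2) n,
    prod_if_le, show n - (2 * k + 1 + 1) = n - 2 * k - 2 by omega]
end

section
/- Let n ≥ 5 and j ∈ Z. For every directed spanning tree G of the directed square cycle C_n² rooted at v_j, there exists a unique pair (k, j') with 0 ≤ k ≤ ⌈(n−2)/2⌉ and 0 ≤ j' ≤ n−1 such that E(G) ⊆ E(S_{n,k,j'}); in particular, the set of directed spanning trees of C_n² rooted at v_j is the disjoint union over k = 0, ..., ⌈(n−2)/2⌉ of the sets of directed spanning trees rooted at v_j of the subgraphs S_{n,k,j}. -/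
open Relation Finset

namespace SqAux
open Relation

lemma frame_eq (n : ℕ) (i : ℤ) : frame n i = ((i : ZMod n), (i : ZMod n) + 1) := by
  simp [frame]

lemma window_eq (n : ℕ) (i : ℤ) : window n i = ((i : ZMod n), (i : ZMod n) + 2) := by
  simp [window]

lemma mem_sqCycle {n : ℕ} {p : ZMod n × ZMod n} :
    p ∈ sqCycleEdges n ↔ p.2 = p.1 + 1 ∨ p.2 = p.1 + 2 := by
  constructor
  · rintro ⟨i, h | h⟩ <;> subst h <;> [rw [frame_eq]; rw [window_eq]] <;> simp
  · intro h
    obtain ⟨i, hi⟩ := ZMod.intCast_surjective (n := n) p.1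
    refine ⟨i, ?_⟩
    rcases h with h | h
    · exact Or.inl (by rw [frame_eq, hi, ← h])
    · exact Or.inr (by rw [window_eq, hi, ← h])

lemma natCast_inj' {n : ℕ} {a b : ℕ} (ha : a < n) (hb : b < n)
    (h : (a : ZMod n) = b) : a = b := by
  have := congrArg ZMod.val h
  rwa [ZMod.val_natCast_of_lt ha, ZMod.val_natCast_of_lt hb] at this

section Tree
variable {n : ℕ} {E : Set (ZMod n × ZMod n)} {r : ZMod n}

lemma root_no_in (h : IsDirSpanningTree (sqCycleEdges n) r E) :
    ∀ w, (w, r) ∉ E := by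
  intro w hw
  by_cases hwr : w = r
  · exact h.2.2.1 r (TransGen.single (show dstep E r r by rw [hwr] at hw; exact hw))
  · exact h.2.2.1 r (Relation.TransGen.tail' (h.2.2.2.2 w hwr) hw)

lemma in_edge (h : IsDirSpanningTree (sqCycleEdges n) r E) (v : ZMod n) (hv : v ≠ r) :
    (v - 1, v) ∈ E ∨ (v - 2, v) ∈ E := by
  obtain ⟨w, hw, -⟩ := h.2.2.2.1 v hv
  have hc := mem_sqCycle.mp (h.1 hw)
  simp only at hc
  rcases hc with h1 | h2
  · exact Or.inl (by rwa [show v - 1 = w by rw [h1]; ring])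
  · exact Or.inr (by rwa [show v - 2 = w by rw [h2]; ring])

lemma not_both (hn : 5 ≤ n) (h : IsDirSpanningTree (sqCycleEdges n) r E) (v : ZMod n)
    (h1 : (v - 1, v) ∈ E) (h2 : (v - 2, v) ∈ E) : False := by
  by_cases hv : v = r
  · subst hv; exact root_no_in h (v - 1) h1
  · obtain ⟨w, -, huniq⟩ := h.2.2.2.1 v hv
    have e1 := huniq _ h1
    have e2 := huniq _ h2
    have h12 : (1 : ZMod n) = 2 := sub_right_inj.mp (e1.trans e2.symm)
    have h12' : ((1 : ℕ) : ZMod n) = ((2 : ℕ) : ZMod n) := by push_cast; exact h12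
    have := natCast_inj' (by omega) (by omega) h12'
    omega

end Tree
end SqAux

namespace SqAux
open Relation
section Tree2
variable {n : ℕ} {E : Set (ZMod n × ZMod n)}

lemma add_nat_ne {n : ℕ} (hn : 0 < n) {s : ℕ} (h1 : 1 ≤ s) (h2 : s < n) (r : ZMod n) :
    r + (s : ZMod n) ≠ r := by
  intro he
  have h0 : ((s : ℕ) : ZMod n) = ((0 : ℕ) : ZMod n) := by
    push_cast
    exact add_eq_left.mp he
  exact absurd (natCast_inj' h2 hn h0) (by omega)

lemma key (hn : 5 ≤ n) (j : ℤ)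
    (h : IsDirSpanningTree (sqCycleEdges n) ((j : ZMod n)) E) :
    ∃ k : ℕ, k ≤ (n - 1) / 2 ∧ E ⊆ stripTailEdges n (k : ℤ) j := by
  classical
  set r : ZMod n := (j : ZMod n) with hrdef
  set P : ℕ → Prop := fun t => ∀ s : ℕ, 1 ≤ s → s ≤ t → (r + s - 2, r + s) ∈ E with hPdef
  have hP0 : P 0 := by intro s h1 h2; omega
  set m := Nat.findGreatest P (n - 1) with hmdef
  have hPm : P m := Nat.findGreatest_spec (Nat.zero_le _) hP0
  have hmle : m ≤ n - 1 := Nat.findGreatest_le _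
  have hmax : m < n - 1 → (r + ((m + 1 : ℕ) : ZMod n) - 2, r + ((m + 1 : ℕ) : ZMod n)) ∉ E := by
    intro hlt hmem
    have hPm1 : P (m + 1) := by
      intro s h1 h2
      rcases Nat.lt_or_ge s (m + 1) with hs | hs
      · exact hPm s h1 (by omega)
      · have hs' : s = m + 1 := by omega
        subst hs'; exact hmem
    exact Nat.findGreatest_is_greatest (n := n - 1) (k := m + 1)
      (by omega) (by omega) hPm1
  rcases Nat.even_or_odd m with hev | hodd
  · -- even case: construct k
    obtain ⟨k, hk2⟩ := hev
    refine ⟨k, by omega, ?_⟩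
    intro p hp
    refine ⟨h.1 hp, fun hesc => ?_⟩
    simp only [escapeRoute, Set.mem_union, Set.mem_insert_iff, Set.mem_singleton_iff,
      Set.mem_setOf_eq] at hesc
    rcases hesc with (hw1 | hw2) | ⟨i, hi1, hi2, hif⟩
    · -- p = window n (j - 2) is the window in-edge of the root
      have he : window n (j - 2) = (r - 2, r) := by
        rw [window_eq]; rw [Prod.mk.injEq]
        constructor <;> push_cast <;> ring
      rw [hw1, he] at hp
      exact root_no_in h _ hp
    · -- p = window n (j + 2k - 1), in-edge of r + (m+1)
      by_cases hm_eq : m = n - 1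
      · have he : window n (j + 2 * (k : ℤ) - 1)
            = (((j + 2 * (k : ℤ) - 1 : ℤ) : ZMod n), r) := by
          rw [window_eq, Prod.mk.injEq]
          refine ⟨rfl, ?_⟩
          have h1 : ((j + 2 * (k : ℤ) - 1 : ℤ) : ZMod n) + 2
              = r + ((m + 1 : ℕ) : ZMod n) := by
            rw [hk2]; push_cast; ring
          rw [h1, show ((m + 1 : ℕ) : ZMod n) = ((n : ℕ) : ZMod n) by congr 1; omega,
            ZMod.natCast_self, add_zero]
        rw [hw2, he] at hp
        exact root_no_in h _ hp
      · apply hmax (by omega)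
        have he : window n (j + 2 * (k : ℤ) - 1)
            = (r + ((m + 1 : ℕ) : ZMod n) - 2, r + ((m + 1 : ℕ) : ZMod n)) := by
          rw [window_eq]; rw [Prod.mk.injEq, hk2]
          constructor <;> push_cast <;> ring
        rw [hw2, he] at hp
        exact hp
    · -- p = frame n i with j - 1 ≤ i ≤ j + 2k - 1
      set t : ℕ := (i - (j - 1)).toNat with htdef
      have hti : i = j - 1 + (t : ℤ) := by omega
      have htle : t ≤ m := by omega
      by_cases ht0 : t = 0
      · have he : frame n i = (r - 1, r) := by
          rw [frame_eq, Prod.mk.injEq, hti, ht0]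
          constructor <;> push_cast <;> ring
        rw [hif, he] at hp
        exact root_no_in h _ hp
      · have he : frame n i = (r + (t : ZMod n) - 1, r + (t : ZMod n)) := by
          rw [frame_eq, Prod.mk.injEq, hti]
          constructor <;> push_cast <;> ring
        rw [hif, he] at hp
        exact not_both hn h (r + (t : ZMod n)) hp (hPm t (by omega) htle)
  · -- odd case: contradiction
    exfalso
    have hmod : m % 2 = 1 := Nat.odd_iff.mp hodd
    set S : Set (ZMod n) := {v | ∃ c : ℕ, c ≤ m - 1 ∧ c % 2 = 0 ∧ v = r + (c : ZMod n)} with hSdef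
    have hrS : r ∈ S := ⟨0, by omega, by omega, by simp⟩
    have hclosed : ∀ v ∈ S, ∀ x, dstep E v x → x ∈ S := by
      rintro v ⟨c, hc, hce, rfl⟩ x hx
      have hcx := mem_sqCycle.mp (h.1 hx)
      simp only at hcx
      rcases hcx with h1 | h2
      · -- x is vertex r + (c+1), in the window run: frame in-edge impossible
        exfalso
        have hx1 : x = r + ((c + 1 : ℕ) : ZMod n) := by rw [h1]; push_cast; ring
        have hf : (x - 1, x) ∈ E := by
          have hv : r + (c : ZMod n) = x - 1 := by rw [hx1]; push_cast; ring
          rwa [hv] at hx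
        have hw : (x - 2, x) ∈ E := by
          have := hPm (c + 1) (by omega) (by omega)
          rwa [hx1]
        exact not_both hn h x hf hw
      · by_cases hcm : c + 2 ≤ m
        · refine ⟨c + 2, by omega, by omega, ?_⟩
          rw [h2]; push_cast; ring
        · exfalso
          have hc2 : c + 2 = m + 1 := by omega
          have hx2 : x = r + ((m + 1 : ℕ) : ZMod n) := by
            rw [h2, show ((m + 1 : ℕ) : ZMod n) = ((c + 2 : ℕ) : ZMod n) by congr 1; omega]
            push_cast; ring
          rcases Nat.lt_or_ge m (n - 1) with hlt | hge
          · apply hmax hlt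
            have hv : r + (c : ZMod n) = r + ((m + 1 : ℕ) : ZMod n) - 2 := by
              rw [show ((m + 1 : ℕ) : ZMod n) = ((c + 2 : ℕ) : ZMod n) by congr 1; omega]
              push_cast; ring
            rw [← hv, ← hx2]
            exact hx
          · have hmn : m = n - 1 := by omega
            have hxr : x = r := by
              rw [hx2, show ((m + 1 : ℕ) : ZMod n) = ((n : ℕ) : ZMod n) by congr 1; omega,
                ZMod.natCast_self, add_zero]
            rw [hxr] at hx
            exact root_no_in h _ hx
    have hreach : ∀ x, ReflTransGen (dstep E) r x → x ∈ S := by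
      intro x hx
      induction hx with
      | refl => exact hrS
      | tail hab hstep ih => exact hclosed _ ih _ hstep
    have h1ne : r + ((1 : ℕ) : ZMod n) ≠ r := add_nat_ne (by omega) le_rfl (by omega) r
    obtain ⟨c, hc, hce, hceq⟩ := hreach _ (h.2.2.2.2 _ h1ne)
    have hcc : ((1 : ℕ) : ZMod n) = (c : ZMod n) := by
      exact add_left_cancel (a := r) (by rw [← hceq])
    have := natCast_inj' (by omega) (by omega) hcc
    omega
end Tree2
end SqAux

namespace SqAux
open Relation
section Tree3
variable {n : ℕ} {E : Set (ZMod n × ZMod n)}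

lemma uniq_j (hn : 5 ≤ n) (j j₂ : ℤ) (k : ℕ)
    (h : IsDirSpanningTree (sqCycleEdges n) ((j : ZMod n)) E)
    (hsub : E ⊆ stripTailEdges n (k : ℤ) j₂) :
    ((j₂ : ZMod n)) = (j : ZMod n) := by
  by_contra hne
  rcases in_edge h ((j₂ : ZMod n)) hne with hf | hw
  · apply (hsub hf).2
    refine Or.inr ⟨j₂ - 1, le_refl _, by omega, ?_⟩
    rw [frame_eq, Prod.mk.injEq]
    constructor <;> push_cast <;> ring
  · apply (hsub hw).2
    refine Or.inl (Or.inl ?_)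
    rw [window_eq, Prod.mk.injEq]
    constructor <;> push_cast <;> ring

lemma uniq_k (hn : 5 ≤ n) (j : ℤ) {k k' : ℕ} (hk : k ≤ (n - 1) / 2) (hk' : k' ≤ (n - 1) / 2)
    (h : IsDirSpanningTree (sqCycleEdges n) ((j : ZMod n)) E)
    (h1 : E ⊆ stripTailEdges n (k : ℤ) j) (h2 : E ⊆ stripTailEdges n (k' : ℤ) j) :
    k = k' := by
  by_contra hne
  wlog hlt : k < k' generalizing k k'
  · exact this hk' hk h2 h1 (Ne.symm hne) (by omega)
  set x : ZMod n := (j : ZMod n) + ((2 * k + 1 : ℕ) : ZMod n) with hx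
  have hxne : x ≠ (j : ZMod n) := add_nat_ne (by omega) (by omega) (by omega) _
  rcases in_edge h x hxne with hf | hw
  · apply (h2 hf).2
    refine Or.inr ⟨j + 2 * k, by omega, by omega, ?_⟩
    rw [frame_eq, Prod.mk.injEq, hx]
    constructor <;> push_cast <;> ring
  · apply (h1 hw).2
    refine Or.inl (Or.inr ?_)
    rw [Set.mem_singleton_iff, window_eq, Prod.mk.injEq, hx]
    constructor <;> push_cast <;> ring

lemma frame_congr {i i' : ℤ} (h : i ≡ i' [ZMOD n]) : frame n i = frame n i' := by
  rw [frame_eq, frame_eq, (ZMod.intCast_eq_intCast_iff i i' n).mpr h]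

lemma window_congr {i i' : ℤ} (h : i ≡ i' [ZMOD n]) : window n i = window n i' := by
  rw [window_eq, window_eq, (ZMod.intCast_eq_intCast_iff i i' n).mpr h]

lemma escape_subset_congr (k : ℤ) {j₁ j₂ : ℤ} (h : j₁ ≡ j₂ [ZMOD n]) :
    escapeRoute n k j₁ ⊆ escapeRoute n k j₂ := by
  obtain ⟨c, hc⟩ := Int.ModEq.dvd h
  intro p hp
  simp only [escapeRoute, Set.mem_union, Set.mem_insert_iff, Set.mem_singleton_iff,
    Set.mem_setOf_eq] at hp ⊢
  rcases hp with (rfl | rfl) | ⟨i, hi1, hi2, rfl⟩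
  · exact Or.inl (Or.inl (window_congr (Int.ModEq.sub_right 2 h)))
  · exact Or.inl (Or.inr (window_congr (Int.ModEq.sub_right 1 (Int.ModEq.add_right _ h))))
  · refine Or.inr ⟨i + (j₂ - j₁), by omega, by omega, ?_⟩
    refine frame_congr ?_
    rw [Int.modEq_iff_dvd]
    exact ⟨c, by omega⟩

lemma stripTail_congr (k : ℤ) {j₁ j₂ : ℤ} (h : j₁ ≡ j₂ [ZMOD n]) :
    stripTailEdges n k j₁ = stripTailEdges n k j₂ := by
  have := Set.Subset.antisymm (escape_subset_congr (n := n) k h)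
    (escape_subset_congr (n := n) k h.symm)
  rw [stripTailEdges, stripTailEdges, this]

end Tree3
end SqAux

open SqAux

theorem spanning_tree_unique_wcsc (n : ℕ) (hn : 5 ≤ n) (j : ℤ) :
    (∀ E : Set (ZMod n × ZMod n),
        IsDirSpanningTree (sqCycleEdges n) ((j : ZMod n)) E →
        ∃! pk : ℕ × ℕ, pk.1 ≤ (n - 1) / 2 ∧ pk.2 ≤ n - 1 ∧
          E ⊆ stripTailEdges n (pk.1 : ℤ) (pk.2 : ℤ)) ∧
    ({E : Set (ZMod n × ZMod n) | IsDirSpanningTree (sqCycleEdges n) ((j : ZMod n)) E} =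
      ⋃ k ∈ Set.Iic ((n - 1) / 2),
        {E : Set (ZMod n × ZMod n) |
          IsDirSpanningTree (stripTailEdges n (k : ℤ) j) ((j : ZMod n)) E}) ∧
    (∀ k k' : ℕ, k ≤ (n - 1) / 2 → k' ≤ (n - 1) / 2 → k ≠ k' →
      Disjoint
        {E : Set (ZMod n × ZMod n) |
          IsDirSpanningTree (stripTailEdges n (k : ℤ) j) ((j : ZMod n)) E}
        {E : Set (ZMod n × ZMod n) |
          IsDirSpanningTree (stripTailEdges n (k' : ℤ) j) ((j : ZMod n)) E}) := by
  have hn0 : (0 : ℤ) < (n : ℤ) := by omega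
  set j₀ : ℕ := (j % n).toNat with hj₀def
  have hmod1 := Int.emod_lt_of_pos j hn0
  have hmod2 := Int.emod_nonneg j (by omega : (n : ℤ) ≠ 0)
  have hj₀n : j₀ < n := by omega
  have hj₀cast : ((j₀ : ℤ)) ≡ j [ZMOD n] := by
    have h1 : ((j₀ : ℤ)) = j % n := by omega
    rw [h1, Int.ModEq, Int.emod_emod_of_dvd _ dvd_rfl]
  refine ⟨?_, ?_, ?_⟩
  · -- part 1
    intro E hE
    obtain ⟨k, hk, hsub⟩ := key hn j hE
    refine ⟨(k, j₀), ⟨hk, by omega, ?_⟩, ?_⟩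
    · rwa [stripTail_congr (k : ℤ) hj₀cast]
    · rintro ⟨k₂, j₂⟩ ⟨hk₂, hj₂, hsub₂⟩
      simp only at hk₂ hj₂ hsub₂ ⊢
      have hjz : (((j₂ : ℤ)) : ZMod n) = ((j : ℤ) : ZMod n) := uniq_j hn j j₂ k₂ hE hsub₂
      have hj₂cast : ((j₂ : ℤ)) ≡ j [ZMOD n] := (ZMod.intCast_eq_intCast_iff _ _ _).mp hjz
      have hj₂₀ : j₂ = j₀ := by
        refine natCast_inj' (by omega) hj₀n ?_
        have : (((j₂ : ℤ)) : ZMod n) = (((j₀ : ℤ)) : ZMod n) :=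
          hjz.trans ((ZMod.intCast_eq_intCast_iff _ _ _).mpr hj₀cast).symm
        push_cast at this
        exact this
      have hsub₂' : E ⊆ stripTailEdges n (k₂ : ℤ) j := by
        rwa [stripTail_congr (k₂ : ℤ) hj₂cast] at hsub₂
      exact Prod.ext (uniq_k hn j hk₂ hk hE hsub₂' hsub) hj₂₀
  · -- part 2
    ext E
    simp only [Set.mem_setOf_eq, Set.mem_iUnion, Set.mem_Iic, exists_prop]
    constructor
    · intro hE
      obtain ⟨k, hk, hsub⟩ := key hn j hE
      exact ⟨k, hk, hsub, hE.2⟩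
    · rintro ⟨k, hk, hE⟩
      exact ⟨fun p hp => (hE.1 hp).1, hE.2⟩
  · -- part 3
    intro k k' hk hk' hne
    rw [Set.disjoint_left]
    intro E hE hE'
    have hsq : IsDirSpanningTree (sqCycleEdges n) ((j : ZMod n)) E :=
      ⟨fun p hp => (hE.1 hp).1, hE.2⟩
    exact hne (uniq_k hn j hk hk' hsq hE.1 hE'.1)
end
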